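/- arXiv:2605.17538 — 11 statements merged into one kernel-verified Lean document; each statement's English description precedes it below -/
import Mathlib

section
/- Let G=(N,E) be a finite simple undirected connected graph with n nodes and p edges, with incidence matrix D∈ℝ^{n×p} (for an arbitrary orientation of the edges). Let Ω=diag(μ_1,…,μ_n) and Σ=diag(σ_1,…,σ_p) be real diagonal matrices. If for every edge e_k=(i,j)∈E it holds that σ_k + μ_i + μ_j − (r_i−1)|μ_i| − (r_j−1)|μ_j| > 0, where r_i denotes the degree of node i, then the symmetric matrix M := DᵀΩD + Σ is positive definite. -/
/-!
Write `y = D x`. The quadratic form of `M` is `∑ᵢ μᵢ yᵢ² + ∑ₖ σₖ xₖ²`, and `yᵢ` is a signed sum of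
the `xₖ` over the at most `rᵢ` edges at node `i`. For `μᵢ ≥ 0` the elementary bound
`(2 - m) ∑ aₖ² ≤ (∑ aₖ)²` for `m` terms, for `μᵢ < 0` Cauchy–Schwarz, gives
`μᵢ yᵢ² ≥ (μᵢ - (rᵢ - 1)|μᵢ|) ∑ₖ∋ᵢ xₖ²`. Summing over the nodes and regrouping by edges, the form
dominates `∑ₖ wₖ xₖ²`, where `wₖ` is the left-hand side of the edge condition, so it is positive.
-/

open Matrix Finset

lemma two_sub_card_mul_sum_sq_le_sq_sum {ι : Type*} (s : Finset ι) (a : ι → ℝ) :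
    (2 - #s : ℝ) * ∑ k ∈ s, a k ^ 2 ≤ (∑ k ∈ s, a k) ^ 2 := by
  obtain h | h := le_or_gt 2 #s
  · have hcoef : (2 - #s : ℝ) ≤ 0 := by
      have : (2 : ℝ) ≤ #s := by exact_mod_cast h
      linarith
    exact (mul_nonpos_of_nonpos_of_nonneg hcoef (sum_nonneg fun k _ => sq_nonneg _)).trans
      (sq_nonneg _)
  · interval_cases hs : #s
    · simp [card_eq_zero.mp hs]
    · obtain ⟨k, rfl⟩ := card_eq_one.mp hs
      norm_num

lemma sub_mul_abs_mul_sum_sq_le_mul_sq_sum {ι : Type*} (s : Finset ι) (a : ι → ℝ) (μ : ℝ)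
    {r : ℕ} (hr : #s ≤ r) :
    (μ - (r - 1) * |μ|) * ∑ k ∈ s, a k ^ 2 ≤ μ * (∑ k ∈ s, a k) ^ 2 := by
  have hsum : 0 ≤ ∑ k ∈ s, a k ^ 2 := sum_nonneg fun k _ => sq_nonneg _
  have hr' : (#s : ℝ) ≤ r := by exact_mod_cast hr
  have hupper : (∑ k ∈ s, a k) ^ 2 ≤ #s * ∑ k ∈ s, a k ^ 2 := sq_sum_le_card_mul_sum_sq
  have hlower := two_sub_card_mul_sum_sq_le_sq_sum s a
  obtain hμ | hμ := le_or_gt 0 μ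
  · rw [abs_of_nonneg hμ]
    nlinarith [mul_le_mul_of_nonneg_left hlower hμ,
      mul_nonneg (mul_nonneg hμ (sub_nonneg.2 hr')) hsum]
  · rw [abs_of_neg hμ]
    nlinarith [mul_le_mul_of_nonpos_left hupper hμ.le,
      mul_nonpos_of_nonpos_of_nonneg (mul_nonpos_of_nonpos_of_nonneg hμ.le (sub_nonneg.2 hr'))
        hsum]

lemma dotProduct_diagonal_mulVec_self {ι : Type*} [Fintype ι] [DecidableEq ι] (d x : ι → ℝ) :
    x ⬝ᵥ (diagonal d *ᵥ x) = ∑ k, d k * x k ^ 2 := by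
  simp only [dotProduct, mulVec_diagonal]
  exact sum_congr rfl fun k _ => by ring

lemma dotProduct_transpose_mul_diagonal_mul_mulVec_self {V ι : Type*} [Fintype V] [Fintype ι]
    [DecidableEq V] (D : Matrix V ι ℝ) (μ : V → ℝ) (x : ι → ℝ) :
    x ⬝ᵥ ((Dᵀ * diagonal μ * D) *ᵥ x) = ∑ i, μ i * (D *ᵥ x) i ^ 2 := by
  rw [← mulVec_mulVec, ← mulVec_mulVec, dotProduct_mulVec, vecMul_transpose,
    dotProduct_diagonal_mulVec_self]

section Incidence

variable {V ι : Type*} [DecidableEq V] [Fintype ι] (epos eneg : ι → V)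

def orientedIncMatrix : Matrix V ι ℝ :=
  of fun i k => if i = epos k then 1 else if i = eneg k then -1 else 0

def incidentEdges (i : V) : Finset ι := {k | i = epos k ∨ i = eneg k}

variable {epos eneg}

lemma orientedIncMatrix_eq_zero_of_notMem {i : V} {k : ι}
    (hk : k ∉ incidentEdges epos eneg i) :
    orientedIncMatrix epos eneg i k = 0 := by
  simp only [incidentEdges, mem_filter, mem_univ, true_and, not_or] at hk
  simp [orientedIncMatrix, hk.1, hk.2]

lemma sq_orientedIncMatrix_of_mem {i : V} {k : ι} (hk : k ∈ incidentEdges epos eneg i) :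
    orientedIncMatrix epos eneg i k ^ 2 = 1 := by
  simp only [incidentEdges, mem_filter, mem_univ, true_and] at hk
  simp only [orientedIncMatrix, of_apply]
  split_ifs <;> simp_all

lemma orientedIncMatrix_mulVec_apply (x : ι → ℝ) (i : V) :
    (orientedIncMatrix epos eneg *ᵥ x) i =
      ∑ k ∈ incidentEdges epos eneg i, orientedIncMatrix epos eneg i k * x k :=
  (sum_subset (subset_univ _) fun k _ hk => by
    simp [orientedIncMatrix_eq_zero_of_notMem hk]).symm

lemma sum_mul_sum_incidentEdges [Fintype V] (hne : ∀ k, epos k ≠ eneg k) (c : V → ℝ)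
    (f : ι → ℝ) :
    ∑ i, c i * ∑ k ∈ incidentEdges epos eneg i, f k = ∑ k, (c (epos k) + c (eneg k)) * f k := by
  simp_rw [mul_sum]
  rw [sum_comm' (t' := univ) (s' := fun k => {epos k, eneg k}) (by simp [incidentEdges])]
  exact sum_congr rfl fun k _ => by rw [sum_pair (hne k), add_mul]

lemma card_incidentEdges_le_degree [Fintype V] (G : SimpleGraph V) [DecidableRel G.Adj]
    (hadj : ∀ k, G.Adj (epos k) (eneg k))
    (hinj : Function.Injective fun k => s(epos k, eneg k)) (i : V) :
    #(incidentEdges epos eneg i) ≤ G.degree i := by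
  rw [← G.card_incidenceFinset_eq_degree]
  refine card_le_card_of_injOn _ (fun k hk => ?_) hinj.injOn
  simp only [incidentEdges, coe_filter, mem_univ, true_and, Set.mem_ofPred_eq] at hk
  simp only [mem_coe, SimpleGraph.mem_incidenceFinset, SimpleGraph.incidenceSet,
    Set.mem_ofPred_eq, SimpleGraph.mem_edgeSet, Sym2.mem_iff]
  exact ⟨hadj k, hk⟩

lemma sub_mul_abs_mul_sum_sq_le_mul_sq_mulVec [Fintype V] (G : SimpleGraph V) [DecidableRel G.Adj]
    (hadj : ∀ k, G.Adj (epos k) (eneg k))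
    (hinj : Function.Injective fun k => s(epos k, eneg k)) (μ : ℝ) (x : ι → ℝ) (i : V) :
    (μ - (G.degree i - 1) * |μ|) * ∑ k ∈ incidentEdges epos eneg i, x k ^ 2 ≤
      μ * (orientedIncMatrix epos eneg *ᵥ x) i ^ 2 := by
  have hsq : ∑ k ∈ incidentEdges epos eneg i, x k ^ 2 =
      ∑ k ∈ incidentEdges epos eneg i, (orientedIncMatrix epos eneg i k * x k) ^ 2 :=
    sum_congr rfl fun k hk => by rw [mul_pow, sq_orientedIncMatrix_of_mem hk, one_mul]
  rw [hsq, orientedIncMatrix_mulVec_apply]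
  exact sub_mul_abs_mul_sum_sq_le_mul_sq_sum _ _ μ (card_incidentEdges_le_degree G hadj hinj i)

lemma sum_mul_sq_le_sum_mul_sq_orientedIncMatrix_mulVec [Fintype V] (G : SimpleGraph V)
    [DecidableRel G.Adj] (hadj : ∀ k, G.Adj (epos k) (eneg k))
    (hinj : Function.Injective fun k => s(epos k, eneg k)) (μ : V → ℝ) (x : ι → ℝ) :
    let c i := μ i - (G.degree i - 1) * |μ i|
    ∑ k, (c (epos k) + c (eneg k)) * x k ^ 2 ≤
      ∑ i, μ i * (orientedIncMatrix epos eneg *ᵥ x) i ^ 2 := by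
  intro c
  rw [← sum_mul_sum_incidentEdges (fun k => (hadj k).ne)]
  exact sum_le_sum fun i _ => sub_mul_abs_mul_sum_sq_le_mul_sq_mulVec G hadj hinj (μ i) x i

end Incidence

theorem stmt_0_general {n p : ℕ} (G : SimpleGraph (Fin n)) [DecidableRel G.Adj]
    (epos eneg : Fin p → Fin n)
    (hadj : ∀ k, G.Adj (epos k) (eneg k))
    (hinj : Function.Injective (fun k : Fin p => s(epos k, eneg k)))
    (D : Matrix (Fin n) (Fin p) ℝ)
    (hD : ∀ i k, D i k =
      if i = epos k then 1 else if i = eneg k then -1 else 0)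
    (μ : Fin n → ℝ) (σ : Fin p → ℝ)
    (hcond : ∀ k : Fin p,
      0 < σ k + μ (epos k) + μ (eneg k)
        - ((G.degree (epos k) : ℝ) - 1) * |μ (epos k)|
        - ((G.degree (eneg k) : ℝ) - 1) * |μ (eneg k)|) :
    (Dᵀ * diagonal μ * D + diagonal σ).PosDef := by
  obtain rfl : D = orientedIncMatrix epos eneg := Matrix.ext hD
  set D := orientedIncMatrix epos eneg
  set c : Fin n → ℝ := fun i => μ i - ((G.degree i : ℝ) - 1) * |μ i|
  have hw : (diagonal fun k => c (epos k) + c (eneg k) + σ k).PosDef :=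
    .diagonal fun k => by linarith [hcond k]
  have hherm : (Dᵀ * diagonal μ * D + diagonal σ).IsHermitian := by
    rw [← conjTranspose_eq_transpose_of_trivial]
    exact (isHermitian_conjTranspose_mul_mul D (isHermitian_diagonal μ)).add
      (isHermitian_diagonal σ)
  refine .of_dotProduct_mulVec_pos hherm fun x hx => ?_
  have key : ∑ k, (c (epos k) + c (eneg k)) * x k ^ 2 ≤ ∑ i, μ i * (D *ᵥ x) i ^ 2 :=
    sum_mul_sq_le_sum_mul_sq_orientedIncMatrix_mulVec G hadj hinj μ x
  calc 0 < x ⬝ᵥ (diagonal _ *ᵥ x) := by simpa using hw.dotProduct_mulVec_pos hx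
    _ = ∑ k, (c (epos k) + c (eneg k)) * x k ^ 2 + ∑ k, σ k * x k ^ 2 := by
      rw [dotProduct_diagonal_mulVec_self, ← sum_add_distrib]
      exact sum_congr rfl fun k _ => add_mul _ _ _
    _ ≤ ∑ i, μ i * (D *ᵥ x) i ^ 2 + ∑ k, σ k * x k ^ 2 := by gcongr
    _ = star x ⬝ᵥ ((Dᵀ * diagonal μ * D + diagonal σ) *ᵥ x) := by
      rw [star_trivial, add_mulVec, dotProduct_add,
        dotProduct_transpose_mul_diagonal_mul_mulVec_self, dotProduct_diagonal_mulVec_self]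

/-- Proposition 1: for a finite simple undirected connected
graph with incidence matrix `D` (edges `e_k = (epos k, eneg k)` for an
arbitrary orientation, each undirected edge listed exactly once), diagonal
`Ω = diag(μ)`, `Σ = diag(σ)`, if for every edge
`σ_k + μ_i + μ_j − (r_i−1)|μ_i| − (r_j−1)|μ_j| > 0` then
`M := DᵀΩD + Σ` is positive definite. -/
theorem stmt_0 {n p : ℕ} (G : SimpleGraph (Fin n)) [DecidableRel G.Adj]
    (hconn : G.Connected)
    (epos eneg : Fin p → Fin n)
    (hadj : ∀ k, G.Adj (epos k) (eneg k))
    (hinj : Function.Injective (fun k : Fin p => s(epos k, eneg k)))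
    (hsurj : ∀ a b : Fin n, G.Adj a b → ∃ k, s(epos k, eneg k) = s(a, b))
    (D : Matrix (Fin n) (Fin p) ℝ)
    (hD : ∀ i k, D i k =
      if i = epos k then 1 else if i = eneg k then -1 else 0)
    (μ : Fin n → ℝ) (σ : Fin p → ℝ)
    (hcond : ∀ k : Fin p,
      0 < σ k + μ (epos k) + μ (eneg k)
        - ((G.degree (epos k) : ℝ) - 1) * |μ (epos k)|
        - ((G.degree (eneg k) : ℝ) - 1) * |μ (eneg k)|) :
    (Dᵀ * diagonal μ * D + diagonal σ).PosDef :=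
  stmt_0_general G epos eneg hadj hinj D hD μ σ hcond
end

section
/- Let G=(N,E) be a finite simple undirected graph with n nodes, p edges, and incidence matrix D∈ℝ^{n×p} for an arbitrary orientation of the edges. Then for every vector y∈ℝ^n and every edge e_k whose positive endpoint is i and negative endpoint is j, the k-th entry of Dᵀ(DDᵀ)y equals (2 + r_{ij})(y_i − y_j) + Σ_{l∈N_i^j} (y_i − y_l) − Σ_{l∈N_j^i} (y_j − y_l), where r_{ij}=|N_i∩N_j| and N_i^j={l∈N_i : l∉N_i∩N_j, l≠j} is the exclusive neighbour set of i relative to j. -/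
open Matrix Finset

section Aux

variable {n p : ℕ} (G : SimpleGraph (Fin n)) [DecidableRel G.Adj]
    (epos eneg : Fin p → Fin n)
    (hadj : ∀ k, G.Adj (epos k) (eneg k))
    (hinj : Function.Injective (fun k : Fin p => s(epos k, eneg k)))
    (hsurj : ∀ a b : Fin n, G.Adj a b → ∃ k, s(epos k, eneg k) = s(a, b))
    (D : Matrix (Fin n) (Fin p) ℝ)
    (hD : ∀ i k, D i k =
      if i = epos k then 1 else if i = eneg k then -1 else 0)

include hadj hD in
lemma aux_dot (z : Fin n → ℝ) (k : Fin p) :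
    ∑ i, D i k * z i = z (epos k) - z (eneg k) := by
  have hne := (hadj k).ne
  have : ∀ i, D i k * z i =
      (if i = epos k then z i else 0) - (if i = eneg k then z i else 0) := by
    intro i
    rw [hD]
    split_ifs with h1 h2 <;> simp_all
  rw [Finset.sum_congr rfl fun i _ => this i, Finset.sum_sub_distrib,
    Finset.sum_ite_eq', Finset.sum_ite_eq']
  simp

include hadj hinj hsurj hD in
lemma aux_lap (y : Fin n → ℝ) (i : Fin n) :
    (D *ᵥ (Dᵀ *ᵥ y)) i = ∑ l ∈ G.neighborFinset i, (y i - y l) := by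
  have hterm : ∀ k, (Dᵀ *ᵥ y) k = y (epos k) - y (eneg k) := by
    intro k
    simpa [Matrix.mulVec, dotProduct, Matrix.transpose_apply, mul_comm] using
      aux_dot G epos eneg hadj D hD y k
  have hlhs : (D *ᵥ (Dᵀ *ᵥ y)) i =
      ∑ k ∈ Finset.univ.filter (fun k => i = epos k ∨ i = eneg k),
        (y i - y (if i = epos k then eneg k else epos k)) := by
    rw [Finset.sum_filter, Matrix.mulVec, dotProduct]
    refine Finset.sum_congr rfl fun k _ => ?_
    rw [hterm, hD]
    have hne := (hadj k).ne
    split_ifs with h1 h2 h3 <;> simp_all <;> ring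
  rw [hlhs]
  refine Finset.sum_bij (fun k _ => if i = epos k then eneg k else epos k)
    ?_ ?_ ?_ ?_
  · intro k hk
    simp only [Finset.mem_filter, Finset.mem_univ, true_and] at hk
    rw [SimpleGraph.mem_neighborFinset]
    split_ifs with h1
    · exact h1 ▸ hadj k
    · rcases hk with h | h
      · exact absurd h h1
      · exact h ▸ (hadj k).symm
  · intro k1 hk1 k2 hk2 heq
    simp only [Finset.mem_filter, Finset.mem_univ, true_and] at hk1 hk2
    have key : ∀ k, (i = epos k ∨ i = eneg k) →
        s(epos k, eneg k) = s(i, if i = epos k then eneg k else epos k) := by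
      intro k hk
      split_ifs with h1
      · rw [← h1]
      · rcases hk with h | h
        · exact absurd h h1
        · rw [← h, Sym2.eq_swap]
    apply hinj
    simp only
    rw [key k1 hk1, key k2 hk2, heq]
  · intro l hl
    rw [SimpleGraph.mem_neighborFinset] at hl
    obtain ⟨k, hk⟩ := hsurj i l hl
    rw [Sym2.eq_iff] at hk
    rcases hk with ⟨h1, h2⟩ | ⟨h1, h2⟩
    · exact ⟨k, by simp [Finset.mem_filter, h1.symm], by rw [if_pos h1.symm, h2]⟩
    · refine ⟨k, by simp [Finset.mem_filter, h2.symm], ?_⟩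
      have hne := (hadj k).ne
      rw [if_neg fun h => hne (h.symm.trans h2.symm), h1]
  · intro k hk; rfl

end Aux

/-- for the incidence matrix `D` of a finite simple undirected
graph (edges `e_k = (epos k, eneg k)`, each undirected edge listed exactly
once), for every `y ∈ ℝⁿ` and edge `e_k` with positive endpoint `i = epos k`
and negative endpoint `j = eneg k`,
`(Dᵀ(DDᵀ)y)_k = (2 + r_{ij})(y_i − y_j) + Σ_{l∈N_i^j}(y_i − y_l)
  − Σ_{l∈N_j^i}(y_j − y_l)`. -/
theorem stmt_3 {n p : ℕ} (G : SimpleGraph (Fin n)) [DecidableRel G.Adj]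
    (epos eneg : Fin p → Fin n)
    (hadj : ∀ k, G.Adj (epos k) (eneg k))
    (hinj : Function.Injective (fun k : Fin p => s(epos k, eneg k)))
    (hsurj : ∀ a b : Fin n, G.Adj a b → ∃ k, s(epos k, eneg k) = s(a, b))
    (D : Matrix (Fin n) (Fin p) ℝ)
    (hD : ∀ i k, D i k =
      if i = epos k then 1 else if i = eneg k then -1 else 0) :
    ∀ (y : Fin n → ℝ) (k : Fin p),
      (Dᵀ *ᵥ ((D * Dᵀ) *ᵥ y)) k =
        (2 + ((G.neighborFinset (epos k) ∩ G.neighborFinset (eneg k)).card : ℝ))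
            * (y (epos k) - y (eneg k))
          + (∑ l ∈ (G.neighborFinset (epos k)).filter
              (fun l => l ∉ G.neighborFinset (epos k) ∩ G.neighborFinset (eneg k)
                ∧ l ≠ eneg k), (y (epos k) - y l))
          - (∑ l ∈ (G.neighborFinset (eneg k)).filter
              (fun l => l ∉ G.neighborFinset (epos k) ∩ G.neighborFinset (eneg k)
                ∧ l ≠ epos k), (y (eneg k) - y l)) := by
  intro y k
  set i := epos k with hi
  set j := eneg k with hj
  set A := G.neighborFinset i ∩ G.neighborFinset j with hA
  have hmv : (D * Dᵀ) *ᵥ y = D *ᵥ (Dᵀ *ᵥ y) := by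
    rw [Matrix.mulVec_mulVec]
  have hL : ∀ a, ((D * Dᵀ) *ᵥ y) a = ∑ l ∈ G.neighborFinset a, (y a - y l) := by
    intro a
    rw [hmv]
    exact aux_lap G epos eneg hadj hinj hsurj D hD y a
  have hentry : (Dᵀ *ᵥ ((D * Dᵀ) *ᵥ y)) k =
      ((D * Dᵀ) *ᵥ y) i - ((D * Dᵀ) *ᵥ y) j := by
    simpa [Matrix.mulVec, dotProduct, Matrix.transpose_apply, mul_comm] using
      aux_dot G epos eneg hadj D hD ((D * Dᵀ) *ᵥ y) k
  rw [hentry, hL, hL]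
  have decomp : ∀ (a b : Fin n), G.Adj a b → b ∉ A → A ⊆ G.neighborFinset a →
      ∑ l ∈ G.neighborFinset a, (y a - y l) =
        (∑ l ∈ A, (y a - y l))
          + (∑ l ∈ (G.neighborFinset a).filter (fun l => l ∉ A ∧ l ≠ b),
              (y a - y l))
          + (y a - y b) := by
    intro a b hab hbA hAa
    have h1 := Finset.sum_filter_add_sum_filter_not (G.neighborFinset a)
      (· ∈ A) (fun l => y a - y l)
    have h2 := Finset.sum_filter_add_sum_filter_not
      ((G.neighborFinset a).filter (fun l => l ∉ A)) (fun l => l ≠ b)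
      (fun l => y a - y l)
    rw [Finset.filter_filter, Finset.filter_filter] at h2
    have h3 : (G.neighborFinset a).filter (fun l => l ∉ A ∧ ¬ l ≠ b) = {b} := by
      ext l
      simp only [Finset.mem_filter, Finset.mem_singleton, not_not,
        SimpleGraph.mem_neighborFinset]
      constructor
      · rintro ⟨_, _, rfl⟩; rfl
      · rintro rfl; exact ⟨hab, hbA, rfl⟩
    have h4 : (G.neighborFinset a).filter (· ∈ A) = A := by
      rw [Finset.filter_mem_eq_inter, Finset.inter_eq_right.mpr hAa]
    rw [h3, Finset.sum_singleton] at h2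
    rw [← h1, h4, ← h2]
    ring
  rw [decomp i j (hadj k) (by simp [hA]) (Finset.inter_subset_left),
    decomp j i (hadj k).symm (by simp [hA]) (Finset.inter_subset_right)]
  have hAsum : (∑ l ∈ A, (y i - y l)) - (∑ l ∈ A, (y j - y l)) =
      (A.card : ℝ) * (y i - y j) := by
    rw [← Finset.sum_sub_distrib]
    have : ∀ l ∈ A, (y i - y l) - (y j - y l) = y i - y j := by
      intro l _; ring
    rw [Finset.sum_congr rfl this, Finset.sum_const, nsmul_eq_mul]
  have expand :
      ((∑ l ∈ A, (y i - y l))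
          + (∑ l ∈ (G.neighborFinset i).filter (fun l => l ∉ A ∧ l ≠ j),
              (y i - y l)) + (y i - y j))
        - ((∑ l ∈ A, (y j - y l))
          + (∑ l ∈ (G.neighborFinset j).filter (fun l => l ∉ A ∧ l ≠ i),
              (y j - y l)) + (y j - y i))
      = (2 + (A.card : ℝ)) * (y i - y j)
          + (∑ l ∈ (G.neighborFinset i).filter (fun l => l ∉ A ∧ l ≠ j),
              (y i - y l))
          - (∑ l ∈ (G.neighborFinset j).filter (fun l => l ∉ A ∧ l ≠ i),
              (y j - y l)) := by
    have := hAsum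
    ring_nf
    ring_nf at this
    linarith
  exact expand
end

section
/- Let G=(N,E) be a finite simple undirected graph with n nodes, p edges, and incidence matrix D∈ℝ^{n×p}. Fix T>0 and let y_1,…,y_n and v_1,…,v_p be square-integrable real functions on [0,T]; set Y=(y_1,…,y_n)ᵀ, V=(v_1,…,v_p)ᵀ, and u_i := −(DV)_i for each node i. Suppose that for every edge e_k=(i,j)∈E there exist constants ν_k≤0, γ_k∈ℝ, β_k∈ℝ such that ⟨u_i−u_j, y_i−y_j⟩_T ≥ ν_k(‖u_i‖_T² + ‖u_j‖_T²) + γ_k‖y_i−y_j‖_T² + β_k. Then ⟨DᵀU, DᵀY⟩_T ≥ ⟨DᵀY, Γ DᵀY⟩_T + ⟨V, DᵀΞD V⟩_T + Σ_{k=1}^p β_k, where U=(u_1,…,u_n)ᵀ, Γ=diag(γ_1,…,γ_p), and Ξ=diag(ν̃_1,…,ν̃_n) with ν̃_i = Σ_{e_k∈E_i} ν_k, E_i being the set of edges incident to node i. -/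
open Matrix Finset MeasureTheory
open scoped ENNReal

lemma half_add_half : (1:ℝ≥0∞)/1 = 1/2 + 1/2 := by
  rw [ENNReal.div_add_div_same, one_add_one_eq_two,
    ENNReal.div_self (by norm_num) (by norm_num),
    ENNReal.div_self (by norm_num) (by norm_num)]

lemma l2_mul_integrable {α : Type*} [MeasurableSpace α] {μ : Measure α} {f g : α → ℝ}
    (hf : MemLp f 2 μ) (hg : MemLp g 2 μ) : Integrable (fun t => f t * g t) μ := by
  have h := hg.smul hf (p := 2) (q := 2) (r := 1)
  exact memLp_one_iff_integrable.mp (by convert h using 1; ext t; simp [mul_comm])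

lemma aux_sum {n : ℕ} {a b : Fin n} (hab : a ≠ b) (w : Fin n → ℝ) :
    (∑ i, (if i = a then (1:ℝ) else if i = b then -1 else 0) * w i) = w a - w b := by
  have h : ∀ i : Fin n, (if i = a then (1:ℝ) else if i = b then -1 else 0) * w i
      = (if i = a then w i else 0) + (if i = b then -w i else 0) := by
    intro i
    by_cases h1 : i = a <;> by_cases h2 : i = b
    · exact absurd (h1.symm.trans h2) hab
    · simp [h1, hab]
    · simp [h1, h2, Ne.symm hab]
    · simp [h1, h2]
  rw [Finset.sum_congr rfl fun i _ => h i, Finset.sum_add_distrib,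
    Finset.sum_ite_eq', Finset.sum_ite_eq']
  simp [sub_eq_add_neg]

lemma aux_sum2 {n : ℕ} {a b : Fin n} (hab : a ≠ b) (w : Fin n → ℝ) :
    (∑ i, (if a = i ∨ b = i then w i else 0)) = w a + w b := by
  have h : ∀ i : Fin n, (if a = i ∨ b = i then w i else 0)
      = (if i = a then w i else 0) + (if i = b then w i else 0) := by
    intro i
    by_cases h1 : i = a <;> by_cases h2 : i = b
    · exact absurd (h1.symm.trans h2) hab
    · simp [h1, hab]
    · simp [h1, h2, Ne.symm hab]
    · simp [h1, h2, Ne.symm h1, Ne.symm h2]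
  rw [Finset.sum_congr rfl fun i _ => h i, Finset.sum_add_distrib,
    Finset.sum_ite_eq', Finset.sum_ite_eq']
  simp

set_option maxHeartbeats 1000000 in
/-- under the pairwise edge dissipativity inequalities, the
network-level inequality
`⟨DᵀU, DᵀY⟩_T ≥ ⟨DᵀY, Γ DᵀY⟩_T + ⟨V, DᵀΞD V⟩_T + Σ_k β_k` holds, where
`u_i = −(DV)_i`, `Γ = diag(γ)` and `Ξ = diag(ν̃)` with
`ν̃_i = Σ_{e_k ∈ E_i} ν_k`. -/
theorem stmt_5 {n p : ℕ} (G : SimpleGraph (Fin n)) [DecidableRel G.Adj]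
    (epos eneg : Fin p → Fin n)
    (hadj : ∀ k, G.Adj (epos k) (eneg k))
    (hinj : Function.Injective (fun k : Fin p => s(epos k, eneg k)))
    (hsurj : ∀ a b : Fin n, G.Adj a b → ∃ k, s(epos k, eneg k) = s(a, b))
    (D : Matrix (Fin n) (Fin p) ℝ)
    (hD : ∀ i k, D i k =
      if i = epos k then 1 else if i = eneg k then -1 else 0)
    (T : ℝ) (hT : 0 < T)
    (y : Fin n → ℝ → ℝ) (v : Fin p → ℝ → ℝ)
    (hy2 : ∀ i, MemLp (y i) 2 (volume.restrict (Set.Ioc 0 T)))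
    (hv2 : ∀ k, MemLp (v k) 2 (volume.restrict (Set.Ioc 0 T)))
    (u : Fin n → ℝ → ℝ)
    (hu : ∀ i t, u i t = -(D *ᵥ (fun k => v k t)) i)
    (ν γ β : Fin p → ℝ) (hν : ∀ k, ν k ≤ 0)
    (hedge : ∀ k : Fin p,
      (∫ t in (0:ℝ)..T,
          (u (epos k) t - u (eneg k) t) * (y (epos k) t - y (eneg k) t)) ≥
        ν k * ((∫ t in (0:ℝ)..T, (u (epos k) t) ^ 2)
              + ∫ t in (0:ℝ)..T, (u (eneg k) t) ^ 2)
          + γ k * (∫ t in (0:ℝ)..T, (y (epos k) t - y (eneg k) t) ^ 2)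
          + β k) :
    (∫ t in (0:ℝ)..T,
        (Dᵀ *ᵥ (fun i => u i t)) ⬝ᵥ (Dᵀ *ᵥ (fun i => y i t))) ≥
      (∫ t in (0:ℝ)..T,
          (Dᵀ *ᵥ (fun i => y i t)) ⬝ᵥ
            (diagonal γ *ᵥ (Dᵀ *ᵥ (fun i => y i t))))
        + (∫ t in (0:ℝ)..T,
            (fun k => v k t) ⬝ᵥ
              ((Dᵀ * diagonal (fun i =>
                  ∑ k ∈ univ.filter (fun k => epos k = i ∨ eneg k = i), ν k)
                * D) *ᵥ (fun k => v k t)))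
        + ∑ k : Fin p, β k := by
  have hne : ∀ k, epos k ≠ eneg k := fun k => (hadj k).ne
  -- u i is in L²
  have hu2 : ∀ i, MemLp (u i) 2 (volume.restrict (Set.Ioc 0 T)) := by
    intro i
    have heq : u i = fun t => ∑ k, (-(D i k)) * v k t := by
      funext t
      rw [hu]
      simp [Matrix.mulVec, dotProduct, neg_mul, Finset.sum_neg_distrib]
    rw [heq]
    exact memLp_finset_sum _ fun k _ => ((hv2 k).const_mul _)
  -- column sums of D
  have hDcol : ∀ (k : Fin p) (w : Fin n → ℝ),
      (∑ i, D i k * w i) = w (epos k) - w (eneg k) := by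
    intro k w
    rw [Finset.sum_congr rfl fun i _ => by rw [hD]]
    exact aux_sum (hne k) w
  -- integrability facts
  have hIuy : ∀ k : Fin p, IntervalIntegrable
      (fun t => (u (epos k) t - u (eneg k) t) * (y (epos k) t - y (eneg k) t))
      volume 0 T := by
    intro k
    rw [intervalIntegrable_iff_integrableOn_Ioc_of_le hT.le]
    exact l2_mul_integrable ((hu2 _).sub (hu2 _)) ((hy2 _).sub (hy2 _))
  have hIy2 : ∀ k : Fin p, IntervalIntegrable
      (fun t => γ k * (y (epos k) t - y (eneg k) t) ^ 2) volume 0 T := by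
    intro k
    rw [intervalIntegrable_iff_integrableOn_Ioc_of_le hT.le]
    have := (l2_mul_integrable ((hy2 (epos k)).sub (hy2 (eneg k)))
      ((hy2 (epos k)).sub (hy2 (eneg k)))).const_mul (γ k)
    simpa [sq, IntegrableOn] using this
  have hIu2 : ∀ i : Fin n, IntervalIntegrable (fun t => (u i t) ^ 2) volume 0 T := by
    intro i
    rw [intervalIntegrable_iff_integrableOn_Ioc_of_le hT.le]
    have := l2_mul_integrable (hu2 i) (hu2 i)
    simpa [sq, IntegrableOn] using this
  have hIν : ∀ k : Fin p, IntervalIntegrable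
      (fun t => ν k * ((u (epos k) t) ^ 2 + (u (eneg k) t) ^ 2)) volume 0 T := by
    intro k
    exact (((hIu2 (epos k)).add (hIu2 (eneg k)))).const_mul (ν k)
  -- pointwise identity for the LHS integrand
  have key1 : ∀ t, (Dᵀ *ᵥ (fun i => u i t)) ⬝ᵥ (Dᵀ *ᵥ (fun i => y i t))
      = ∑ k, (u (epos k) t - u (eneg k) t) * (y (epos k) t - y (eneg k) t) := by
    intro t
    simp only [dotProduct, Matrix.mulVec, Matrix.transpose_apply]
    exact Finset.sum_congr rfl fun k _ => by rw [hDcol, hDcol]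
  -- pointwise identity for the Γ term
  have key2 : ∀ t, (Dᵀ *ᵥ (fun i => y i t)) ⬝ᵥ
      (diagonal γ *ᵥ (Dᵀ *ᵥ (fun i => y i t)))
      = ∑ k, γ k * (y (epos k) t - y (eneg k) t) ^ 2 := by
    intro t
    have hgen : ∀ (z : Fin p → ℝ), z ⬝ᵥ (diagonal γ *ᵥ z) = ∑ k, γ k * z k ^ 2 := by
      intro z
      simp only [dotProduct, Matrix.mulVec_diagonal]
      exact Finset.sum_congr rfl fun k _ => by ring
    rw [hgen]
    refine Finset.sum_congr rfl fun k _ => ?_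
    have : (Dᵀ *ᵥ (fun i => y i t)) k = ∑ i, D i k * y i t := by
      simp [Matrix.mulVec, dotProduct, Matrix.transpose_apply]
    rw [this, hDcol]
  -- pointwise identity for the Ξ term
  have key3 : ∀ t, (fun k => v k t) ⬝ᵥ
      ((Dᵀ * diagonal (fun i =>
          ∑ k ∈ univ.filter (fun k => epos k = i ∨ eneg k = i), ν k)
        * D) *ᵥ (fun k => v k t))
      = ∑ k, ν k * ((u (epos k) t) ^ 2 + (u (eneg k) t) ^ 2) := by
    intro t
    set w : Fin p → ℝ := fun k => v k t with hw
    set ξ : Fin n → ℝ :=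
      fun i => ∑ k ∈ univ.filter (fun k => epos k = i ∨ eneg k = i), ν k with hξ
    have hz : ∀ i, (D *ᵥ w) i = -(u i t) := by
      intro i
      rw [hu]
      ring
    have h1 : (Dᵀ * diagonal ξ * D) *ᵥ w
        = Dᵀ *ᵥ (diagonal ξ *ᵥ (D *ᵥ w)) := by
      rw [Matrix.mulVec_mulVec, Matrix.mulVec_mulVec, Matrix.mul_assoc]
    rw [h1, dotProduct_mulVec, Matrix.vecMul_transpose]
    have h2 : (D *ᵥ w) ⬝ᵥ (diagonal ξ *ᵥ (D *ᵥ w))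
        = ∑ i, ξ i * (u i t) ^ 2 := by
      simp only [dotProduct, Matrix.mulVec_diagonal]
      refine Finset.sum_congr rfl fun i _ => ?_
      rw [hz i]
      ring
    rw [h2]
    calc ∑ i, ξ i * (u i t) ^ 2
        = ∑ i, ∑ k, (if epos k = i ∨ eneg k = i then ν k * (u i t) ^ 2 else 0) := by
          refine Finset.sum_congr rfl fun i _ => ?_
          rw [hξ]
          beta_reduce
          rw [Finset.sum_filter, Finset.sum_mul]
          refine Finset.sum_congr rfl fun k _ => ?_
          split <;> simp
      _ = ∑ k, ∑ i, (if epos k = i ∨ eneg k = i then ν k * (u i t) ^ 2 else 0) :=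
          Finset.sum_comm
      _ = ∑ k, ν k * ((u (epos k) t) ^ 2 + (u (eneg k) t) ^ 2) := by
          refine Finset.sum_congr rfl fun k _ => ?_
          rw [aux_sum2 (hne k) (fun i => ν k * (u i t) ^ 2)]
          ring
  -- rewrite the three integrals
  have L1 : (∫ t in (0:ℝ)..T,
      (Dᵀ *ᵥ (fun i => u i t)) ⬝ᵥ (Dᵀ *ᵥ (fun i => y i t)))
      = ∑ k, ∫ t in (0:ℝ)..T,
          (u (epos k) t - u (eneg k) t) * (y (epos k) t - y (eneg k) t) := by
    rw [intervalIntegral.integral_congr (g := fun t => ∑ k,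
        (u (epos k) t - u (eneg k) t) * (y (epos k) t - y (eneg k) t))
        (fun t _ => key1 t)]
    exact intervalIntegral.integral_finset_sum fun k _ => hIuy k
  have L2 : (∫ t in (0:ℝ)..T,
      (Dᵀ *ᵥ (fun i => y i t)) ⬝ᵥ (diagonal γ *ᵥ (Dᵀ *ᵥ (fun i => y i t))))
      = ∑ k, γ k * ∫ t in (0:ℝ)..T, (y (epos k) t - y (eneg k) t) ^ 2 := by
    rw [intervalIntegral.integral_congr (g := fun t => ∑ k,
        γ k * (y (epos k) t - y (eneg k) t) ^ 2) (fun t _ => key2 t)]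
    have hs := intervalIntegral.integral_finset_sum (μ := volume) (a := (0:ℝ)) (b := T) (s := Finset.univ)
      (f := fun (k : Fin p) t => γ k * (y (epos k) t - y (eneg k) t) ^ 2)
      (fun k _ => hIy2 k)
    rw [hs]
    exact Finset.sum_congr rfl fun k _ => intervalIntegral.integral_const_mul _ _
  have L3 : (∫ t in (0:ℝ)..T,
      (fun k => v k t) ⬝ᵥ
        ((Dᵀ * diagonal (fun i =>
            ∑ k ∈ univ.filter (fun k => epos k = i ∨ eneg k = i), ν k)
          * D) *ᵥ (fun k => v k t)))
      = ∑ k, ν k * ((∫ t in (0:ℝ)..T, (u (epos k) t) ^ 2)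
          + ∫ t in (0:ℝ)..T, (u (eneg k) t) ^ 2) := by
    rw [intervalIntegral.integral_congr (g := fun t => ∑ k,
        ν k * ((u (epos k) t) ^ 2 + (u (eneg k) t) ^ 2)) (fun t _ => key3 t)]
    have hs := intervalIntegral.integral_finset_sum (μ := volume) (a := (0:ℝ)) (b := T) (s := Finset.univ)
      (f := fun (k : Fin p) t => ν k * ((u (epos k) t) ^ 2 + (u (eneg k) t) ^ 2))
      (fun k _ => hIν k)
    rw [hs]
    refine Finset.sum_congr rfl fun k _ => ?_
    rw [intervalIntegral.integral_const_mul,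
      intervalIntegral.integral_add (hIu2 _) (hIu2 _)]
  rw [ge_iff_le, L1, L2, L3]
  calc (∑ k, γ k * ∫ t in (0:ℝ)..T, (y (epos k) t - y (eneg k) t) ^ 2)
        + (∑ k, ν k * ((∫ t in (0:ℝ)..T, (u (epos k) t) ^ 2)
            + ∫ t in (0:ℝ)..T, (u (eneg k) t) ^ 2))
        + ∑ k : Fin p, β k
      = ∑ k, (ν k * ((∫ t in (0:ℝ)..T, (u (epos k) t) ^ 2)
            + ∫ t in (0:ℝ)..T, (u (eneg k) t) ^ 2)
          + γ k * (∫ t in (0:ℝ)..T, (y (epos k) t - y (eneg k) t) ^ 2)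
          + β k) := by
        rw [Finset.sum_add_distrib, Finset.sum_add_distrib]
        ring
    _ ≤ ∑ k, ∫ t in (0:ℝ)..T,
          (u (epos k) t - u (eneg k) t) * (y (epos k) t - y (eneg k) t) :=
        Finset.sum_le_sum fun k _ => hedge k
end

section
/- Let G=(N,E) be a finite simple undirected graph with n nodes, p edges, and incidence matrix D∈ℝ^{n×p}. Fix T>0 and let y_1,…,y_n and v_1,…,v_p be square-integrable real functions on [0,T]; set Y=(y_1,…,y_n)ᵀ and V=(v_1,…,v_p)ᵀ. Then ⟨V, Dᵀ(DDᵀ − I)Y⟩_T ≥ ⟨V, (I+Φ)DᵀY⟩_T − ⟨V, Φ̄V⟩_T − ⟨DᵀY, Φ̄DᵀY⟩_T, where Φ=diag(r̃_1,…,r̃_p) and Φ̄=(1/2)diag(r̄_1,…,r̄_p), with r̃_k=r_{ij} the number of common neighbours and r̄_k=|N_i^j|+|N_j^i| for the edge e_k=(i,j). -/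
open Matrix Finset MeasureTheory

/-- The exclusive neighbour set `N_i^j = {l ∈ N_i : l ∉ N_i ∩ N_j, l ≠ j}`. -/
def exclNbr {n : ℕ} (G : SimpleGraph (Fin n)) [DecidableRel G.Adj]
    (i j : Fin n) : Finset (Fin n) :=
  (G.neighborFinset i).filter
    (fun l => l ∉ G.neighborFinset i ∩ G.neighborFinset j ∧ l ≠ j)

section Aux
variable {n p : ℕ} (G : SimpleGraph (Fin n)) [DecidableRel G.Adj]
  (epos eneg : Fin p → Fin n)

lemma DT_mulVec (D : Matrix (Fin n) (Fin p) ℝ)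
    (hD : ∀ i k, D i k = if i = epos k then 1 else if i = eneg k then -1 else 0)
    (hne : ∀ k, epos k ≠ eneg k)
    (W : Fin n → ℝ) (k : Fin p) :
    (Dᵀ *ᵥ W) k = W (epos k) - W (eneg k) := by
  simp only [mulVec, dotProduct, transpose_apply]
  have h : ∀ i, D i k * W i =
      (if i = epos k then W i else 0) + (if i = eneg k then -W i else 0) := by
    intro i
    rcases eq_or_ne i (epos k) with h1 | h1
    · subst h1; simp [hD, hne k]
    · rcases eq_or_ne i (eneg k) with h2 | h2
      · subst h2; simp [hD, h1]
      · simp [hD, h1, h2]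
  rw [Finset.sum_congr rfl (fun i _ => h i), Finset.sum_add_distrib]
  simp [sub_eq_add_neg]

lemma lap (hadj : ∀ k, G.Adj (epos k) (eneg k))
    (hinj : Function.Injective (fun k : Fin p => s(epos k, eneg k)))
    (hsurj : ∀ a b : Fin n, G.Adj a b → ∃ k, s(epos k, eneg k) = s(a, b))
    (D : Matrix (Fin n) (Fin p) ℝ)
    (hD : ∀ i k, D i k = if i = epos k then 1 else if i = eneg k then -1 else 0)
    (Y : Fin n → ℝ) (i : Fin n) :
    ∑ k, D i k * (Y (epos k) - Y (eneg k)) =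
      ∑ m ∈ G.neighborFinset i, (Y i - Y m) := by
  classical
  rw [← Finset.sum_filter_add_sum_filter_not Finset.univ
    (fun k => i = epos k ∨ i = eneg k)]
  have h0 : ∑ k ∈ Finset.univ.filter (fun k => ¬(i = epos k ∨ i = eneg k)),
      D i k * (Y (epos k) - Y (eneg k)) = 0 := by
    apply Finset.sum_eq_zero
    intro k hk
    simp only [Finset.mem_filter, not_or] at hk
    simp [hD, hk.2.1, hk.2.2]
  rw [h0, add_zero]
  refine Finset.sum_bij (fun k _ => if i = epos k then eneg k else epos k) ?_ ?_ ?_ ?_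
  · intro k hk
    simp only [Finset.mem_filter, Finset.mem_univ, true_and] at hk
    by_cases h : i = epos k
    · simp only [if_pos h, SimpleGraph.mem_neighborFinset]
      exact h ▸ hadj k
    · rcases hk with h' | h'
      · exact absurd h' h
      · simp only [if_neg h, SimpleGraph.mem_neighborFinset]
        exact h' ▸ (hadj k).symm
  · intro k₁ hk₁ k₂ hk₂ heq
    simp only [Finset.mem_filter, Finset.mem_univ, true_and] at hk₁ hk₂
    apply hinj
    have e1 : s(epos k₁, eneg k₁) = s(i, if i = epos k₁ then eneg k₁ else epos k₁) := by
      by_cases h : i = epos k₁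
      · simp [if_pos h, ← h]
      · rcases hk₁ with h' | h'
        · exact absurd h' h
        · simp only [if_neg h, ← h']
          exact Sym2.eq_swap
    have e2 : s(epos k₂, eneg k₂) = s(i, if i = epos k₂ then eneg k₂ else epos k₂) := by
      by_cases h : i = epos k₂
      · simp [if_pos h, ← h]
      · rcases hk₂ with h' | h'
        · exact absurd h' h
        · simp only [if_neg h, ← h']
          exact Sym2.eq_swap
    have heq' : (if i = epos k₁ then eneg k₁ else epos k₁)
        = (if i = epos k₂ then eneg k₂ else epos k₂) := heq
    show s(epos k₁, eneg k₁) = s(epos k₂, eneg k₂)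
    rw [e1, e2, heq']
  · intro m hm
    rw [SimpleGraph.mem_neighborFinset] at hm
    obtain ⟨k, hk⟩ := hsurj i m hm
    rw [Sym2.eq_iff] at hk
    rcases hk with ⟨h1, h2⟩ | ⟨h1, h2⟩
    · refine ⟨k, ?_, ?_⟩
      · simp [h1]
      · show (if i = epos k then eneg k else epos k) = m
        rw [if_pos h1.symm, h2]
    · refine ⟨k, ?_, ?_⟩
      · simp [h2]
      · have hne' : ¬ (i = epos k) := by
          rw [h1]; exact fun h => hm.ne (h ▸ rfl)
        show (if i = epos k then eneg k else epos k) = m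
        rw [if_neg hne', h1]
  · intro k hk
    simp only [Finset.mem_filter, Finset.mem_univ, true_and] at hk
    show D i k * (Y (epos k) - Y (eneg k))
        = Y i - Y (if i = epos k then eneg k else epos k)
    by_cases h : i = epos k
    · rw [if_pos h, hD, if_pos h, ← h, one_mul]
    · rcases hk with h' | h'
      · exact absurd h' h
      · rw [if_neg h, hD, if_neg h, if_pos h', ← h']
        ring

lemma dirSum (hadj : ∀ k, G.Adj (epos k) (eneg k))
    (hinj : Function.Injective (fun k : Fin p => s(epos k, eneg k)))
    (hsurj : ∀ a b : Fin n, G.Adj a b → ∃ k, s(epos k, eneg k) = s(a, b))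
    (h : Fin n → Fin n → ℝ) :
    ∑ k, (h (epos k) (eneg k) + h (eneg k) (epos k)) =
      ∑ q ∈ (Finset.univ ×ˢ Finset.univ).filter
        (fun q : Fin n × Fin n => G.Adj q.1 q.2), h q.1 q.2 := by
  classical
  have step : ∑ k, (h (epos k) (eneg k) + h (eneg k) (epos k)) =
      ∑ x : Fin p × Bool, (if x.2 then h (epos x.1) (eneg x.1)
        else h (eneg x.1) (epos x.1)) := by
    rw [Fintype.sum_prod_type]
    refine Finset.sum_congr rfl (fun k _ => ?_)
    simp
  rw [step]
  refine Finset.sum_bij (fun x _ => if x.2 then (epos x.1, eneg x.1)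
    else (eneg x.1, epos x.1)) ?_ ?_ ?_ ?_
  · rintro ⟨k, b⟩ -
    cases b <;> simp [hadj k, (hadj k).symm]
  · intro x1 h1 x2 h2 heq
    obtain ⟨k₁, b₁⟩ := x1
    obtain ⟨k₂, b₂⟩ := x2
    have heq' : (if b₁ then (epos k₁, eneg k₁) else (eneg k₁, epos k₁))
        = (if b₂ then (epos k₂, eneg k₂) else (eneg k₂, epos k₂)) := heq
    cases b₁ <;> cases b₂ <;>
      simp only [if_true, Bool.false_eq_true, if_false, Prod.mk.injEq] at heq'
    · have hk : k₁ = k₂ := hinj (show s(epos k₁, eneg k₁) = s(epos k₂, eneg k₂) by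
        rw [heq'.1, heq'.2])
      rw [hk]
    · have hk : k₁ = k₂ := hinj (show s(epos k₁, eneg k₁) = s(epos k₂, eneg k₂) from
        Sym2.eq_iff.mpr (Or.inr ⟨heq'.2, heq'.1⟩))
      subst hk
      exact absurd heq'.2 (hadj k₁).ne
    · have hk : k₁ = k₂ := hinj (show s(epos k₁, eneg k₁) = s(epos k₂, eneg k₂) from
        Sym2.eq_iff.mpr (Or.inr ⟨heq'.1, heq'.2⟩))
      subst hk
      exact absurd heq'.1 (hadj k₁).ne
    · have hk : k₁ = k₂ := hinj (show s(epos k₁, eneg k₁) = s(epos k₂, eneg k₂) by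
        rw [heq'.1, heq'.2])
      rw [hk]
  · rintro ⟨a, b⟩ hab
    simp only [Finset.mem_filter, Finset.mem_product] at hab
    obtain ⟨k, hk⟩ := hsurj a b hab.2
    rw [Sym2.eq_iff] at hk
    rcases hk with ⟨h1, h2⟩ | ⟨h1, h2⟩
    · exact ⟨(k, true), Finset.mem_univ _, by simp [h1, h2]⟩
    · exact ⟨(k, false), Finset.mem_univ _, by simp [h1, h2]⟩
  · rintro ⟨k, b⟩ -
    cases b <;> simp

lemma swapSum (Y : Fin n → ℝ) :
    ∑ q ∈ (Finset.univ ×ˢ Finset.univ).filter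
        (fun q : Fin n × Fin n => G.Adj q.1 q.2),
      ∑ m ∈ exclNbr G q.1 q.2, (Y q.1 - Y m)^2 =
    ∑ q ∈ (Finset.univ ×ˢ Finset.univ).filter
        (fun q : Fin n × Fin n => G.Adj q.1 q.2),
      ((exclNbr G q.1 q.2).card : ℝ) * (Y q.1 - Y q.2)^2 := by
  classical
  have hmem : ∀ a b m : Fin n,
      (G.Adj a b ∧ m ∈ exclNbr G a b) ↔ (G.Adj a m ∧ b ∈ exclNbr G a m) := by
    intro a b m
    simp only [exclNbr, Finset.mem_filter, Finset.mem_inter,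
      SimpleGraph.mem_neighborFinset]
    constructor
    · rintro ⟨h1, h2, h3, h4⟩
      refine ⟨h2, h1, fun hc => h3 ⟨h2, (G.adj_comm b m).mpr hc.2⟩, fun hc => h4 (by rw [hc])⟩
    · rintro ⟨h1, h2, h3, h4⟩
      refine ⟨h2, h1, fun hc => h3 ⟨h2, (G.adj_comm m b).mpr hc.2⟩, fun hc => h4 (by rw [hc])⟩
  have expand : ∀ (F : Fin n → Fin n → Fin n → ℝ),
      (∑ q ∈ (Finset.univ ×ˢ Finset.univ).filter
        (fun q : Fin n × Fin n => G.Adj q.1 q.2),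
        ∑ m ∈ exclNbr G q.1 q.2, F q.1 q.2 m) =
      ∑ a : Fin n, ∑ b : Fin n, ∑ m : Fin n,
        (if G.Adj a b ∧ m ∈ exclNbr G a b then F a b m else 0) := by
    intro F
    rw [Finset.sum_filter, Finset.sum_product]
    refine Finset.sum_congr rfl (fun a _ => Finset.sum_congr rfl (fun b _ => ?_))
    show (if G.Adj a b then ∑ m ∈ exclNbr G a b, F a b m else 0) = _
    by_cases hab : G.Adj a b
    · rw [if_pos hab]
      symm
      simp only [hab, true_and]
      rw [Finset.sum_ite_mem, Finset.univ_inter]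
    · simp only [hab, if_neg, false_and, if_false, Finset.sum_const_zero]
  rw [expand (fun a _ m => (Y a - Y m)^2)]
  have expand2 : ∑ q ∈ (Finset.univ ×ˢ Finset.univ).filter
        (fun q : Fin n × Fin n => G.Adj q.1 q.2),
      ((exclNbr G q.1 q.2).card : ℝ) * (Y q.1 - Y q.2)^2 =
      ∑ a : Fin n, ∑ b : Fin n, ∑ m : Fin n,
        (if G.Adj a b ∧ m ∈ exclNbr G a b then (Y a - Y b)^2 else 0) := by
    rw [← expand (fun a b _ => (Y a - Y b)^2)]
    refine Finset.sum_congr rfl (fun q _ => ?_)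
    rw [Finset.sum_const, nsmul_eq_mul]
  rw [expand2]
  refine Finset.sum_congr rfl (fun a _ => ?_)
  rw [Finset.sum_comm]
  refine Finset.sum_congr rfl (fun b _ => Finset.sum_congr rfl (fun m _ => ?_))
  by_cases hc : G.Adj a m ∧ b ∈ exclNbr G a m
  · rw [if_pos hc, if_pos ((hmem a b m).mpr hc)]
  · rw [if_neg hc, if_neg (fun hc' => hc ((hmem a b m).mp hc'))]

lemma nbrSplit (a b : Fin n) (hab : G.Adj a b) (f : Fin n → ℝ) :
    ∑ m ∈ G.neighborFinset a, f m =
      f b + (∑ m ∈ G.neighborFinset a ∩ G.neighborFinset b, f m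
        + ∑ m ∈ exclNbr G a b, f m) := by
  classical
  have hb : b ∈ G.neighborFinset a := by
    rw [SimpleGraph.mem_neighborFinset]; exact hab
  rw [← Finset.add_sum_erase _ f hb]
  congr 1
  rw [← Finset.sum_filter_add_sum_filter_not ((G.neighborFinset a).erase b)
    (fun m => G.Adj b m)]
  congr 1
  · apply Finset.sum_congr _ (fun _ _ => rfl)
    ext m
    simp only [Finset.mem_filter, Finset.mem_erase, Finset.mem_inter,
      SimpleGraph.mem_neighborFinset]
    constructor
    · rintro ⟨⟨h1, h2⟩, h3⟩
      exact ⟨h2, h3⟩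
    · rintro ⟨h1, h2⟩
      exact ⟨⟨h2.ne', h1⟩, h2⟩
  · apply Finset.sum_congr _ (fun _ _ => rfl)
    ext m
    simp only [Finset.mem_filter, Finset.mem_erase, exclNbr, Finset.mem_inter,
      SimpleGraph.mem_neighborFinset]
    constructor
    · rintro ⟨⟨h1, h2⟩, h3⟩
      exact ⟨h2, fun hc => h3 hc.2, h1⟩
    · rintro ⟨h1, h2, h3⟩
      exact ⟨⟨h3, h1⟩, fun hc => h2 ⟨h1, hc⟩⟩

end Aux

section Key
variable {n p : ℕ} (G : SimpleGraph (Fin n)) [DecidableRel G.Adj]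
  (epos eneg : Fin p → Fin n)

lemma key (hadj : ∀ k, G.Adj (epos k) (eneg k))
    (hinj : Function.Injective (fun k : Fin p => s(epos k, eneg k)))
    (hsurj : ∀ a b : Fin n, G.Adj a b → ∃ k, s(epos k, eneg k) = s(a, b))
    (D : Matrix (Fin n) (Fin p) ℝ)
    (hD : ∀ i k, D i k = if i = epos k then 1 else if i = eneg k then -1 else 0)
    (V : Fin p → ℝ) (Y : Fin n → ℝ) :
    V ⬝ᵥ (((1 : Matrix (Fin p) (Fin p) ℝ)
        + diagonal (fun k =>
          ((G.neighborFinset (epos k) ∩ G.neighborFinset (eneg k)).card : ℝ)))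
        *ᵥ (Dᵀ *ᵥ Y))
      - V ⬝ᵥ (((1 / 2 : ℝ) • diagonal (fun k =>
          (((exclNbr G (epos k) (eneg k)).card
            + (exclNbr G (eneg k) (epos k)).card : ℕ) : ℝ))) *ᵥ V)
      - (Dᵀ *ᵥ Y) ⬝ᵥ (((1 / 2 : ℝ) • diagonal (fun k =>
          (((exclNbr G (epos k) (eneg k)).card
            + (exclNbr G (eneg k) (epos k)).card : ℕ) : ℝ))) *ᵥ (Dᵀ *ᵥ Y))
      ≤ V ⬝ᵥ ((Dᵀ * (D * Dᵀ - 1)) *ᵥ Y) := by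
  classical
  have hne : ∀ k, epos k ≠ eneg k := fun k => (hadj k).ne
  set rr : Fin p → ℝ := fun k =>
    ((G.neighborFinset (epos k) ∩ G.neighborFinset (eneg k)).card : ℝ) with hrr
  set cc : Fin p → ℝ := fun k =>
    (((exclNbr G (epos k) (eneg k)).card
      + (exclNbr G (eneg k) (epos k)).card : ℕ) : ℝ) with hcc
  set z : Fin p → ℝ := fun k => Y (epos k) - Y (eneg k) with hzdef
  have hz : Dᵀ *ᵥ Y = z := funext (fun k => DT_mulVec epos eneg D hD hne Y k)
  -- B
  have hB : ∀ i, (D *ᵥ z) i = ∑ m ∈ G.neighborFinset i, (Y i - Y m) := by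
    intro i
    have h1 : (D *ᵥ z) i = ∑ k, D i k * (Y (epos k) - Y (eneg k)) := by
      simp [mulVec, dotProduct, hzdef]
    rw [h1, lap G epos eneg hadj hinj hsurj D hD Y i]
  -- definitions of R and Q pieces
  have hBk : ∀ k, (D *ᵥ z) (epos k) - (D *ᵥ z) (eneg k)
      = (2 + rr k) * z k
        + ((∑ m ∈ exclNbr G (epos k) (eneg k), (Y (epos k) - Y m))
          - ∑ m ∈ exclNbr G (eneg k) (epos k), (Y (eneg k) - Y m)) := by
    intro k
    rw [hB, hB, nbrSplit G (epos k) (eneg k) (hadj k),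
      nbrSplit G (eneg k) (epos k) (hadj k).symm,
      Finset.inter_comm (G.neighborFinset (eneg k)) (G.neighborFinset (epos k))]
    have hcomb : (∑ m ∈ G.neighborFinset (epos k) ∩ G.neighborFinset (eneg k),
          (Y (epos k) - Y m))
        - ∑ m ∈ G.neighborFinset (epos k) ∩ G.neighborFinset (eneg k),
          (Y (eneg k) - Y m) = rr k * z k := by
      rw [← Finset.sum_sub_distrib]
      have : ∀ m ∈ G.neighborFinset (epos k) ∩ G.neighborFinset (eneg k),
          (Y (epos k) - Y m) - (Y (eneg k) - Y m) = z k := fun m _ => by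
        simp [hzdef]
      rw [Finset.sum_congr rfl this, Finset.sum_const, nsmul_eq_mul, hrr]
    have hzk : z k = Y (epos k) - Y (eneg k) := by rw [hzdef]
    linarith [hcomb]
  -- main LHS
  have hmat : (Dᵀ * (D * Dᵀ - 1)) *ᵥ Y
      = fun k => ((D *ᵥ z) (epos k) - (D *ᵥ z) (eneg k)) - z k := by
    rw [← mulVec_mulVec, sub_mulVec, one_mulVec, ← mulVec_mulVec, hz,
      mulVec_sub]
    funext k
    rw [Pi.sub_apply, DT_mulVec epos eneg D hD hne (D *ᵥ z) k, hz]
  have hmain : V ⬝ᵥ ((Dᵀ * (D * Dᵀ - 1)) *ᵥ Y)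
      = ∑ k, V k * ((1 + rr k) * z k
        + ((∑ m ∈ exclNbr G (epos k) (eneg k), (Y (epos k) - Y m))
          - ∑ m ∈ exclNbr G (eneg k) (epos k), (Y (eneg k) - Y m))) := by
    rw [hmat]
    simp only [dotProduct]
    refine Finset.sum_congr rfl (fun k _ => ?_)
    rw [hBk k]
    ring
  have hI2 : V ⬝ᵥ (((1 : Matrix (Fin p) (Fin p) ℝ) + diagonal rr) *ᵥ (Dᵀ *ᵥ Y))
      = ∑ k, V k * ((1 + rr k) * z k) := by
    rw [hz]
    simp only [add_mulVec, one_mulVec, dotProduct, Pi.add_apply, mulVec_diagonal]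
    refine Finset.sum_congr rfl (fun k _ => ?_)
    ring
  have hI3 : V ⬝ᵥ (((1 / 2 : ℝ) • diagonal cc) *ᵥ V)
      = ∑ k, 1 / 2 * cc k * V k * V k := by
    simp only [smul_mulVec, dotProduct, Pi.smul_apply, mulVec_diagonal,
      smul_eq_mul]
    refine Finset.sum_congr rfl (fun k _ => ?_)
    ring
  have hI4 : (Dᵀ *ᵥ Y) ⬝ᵥ (((1 / 2 : ℝ) • diagonal cc) *ᵥ (Dᵀ *ᵥ Y))
      = ∑ k, 1 / 2 * cc k * z k * z k := by
    rw [hz]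
    simp only [smul_mulVec, dotProduct, Pi.smul_apply, mulVec_diagonal,
      smul_eq_mul]
    refine Finset.sum_congr rfl (fun k _ => ?_)
    ring
  rw [hmain, hI2, hI3, hI4]
  -- double counting
  have h1 := dirSum G epos eneg hadj hinj hsurj
    (fun a b => ∑ m ∈ exclNbr G a b, (Y a - Y m) ^ 2)
  have h2 := dirSum G epos eneg hadj hinj hsurj
    (fun a b => ((exclNbr G a b).card : ℝ) * (Y a - Y b) ^ 2)
  have h3 := swapSum G Y
  have hQ : ∑ k, ((∑ m ∈ exclNbr G (epos k) (eneg k), (Y (epos k) - Y m) ^ 2)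
        + ∑ m ∈ exclNbr G (eneg k) (epos k), (Y (eneg k) - Y m) ^ 2)
      = ∑ k, (((exclNbr G (epos k) (eneg k)).card : ℝ)
          * (Y (epos k) - Y (eneg k)) ^ 2
        + ((exclNbr G (eneg k) (epos k)).card : ℝ)
          * (Y (eneg k) - Y (epos k)) ^ 2) := h1.trans (h3.trans h2.symm)
  have hdc : ∑ k, (1 / 2 : ℝ) * cc k * z k * z k
      = ∑ k, (1 / 2 : ℝ)
          * ((∑ m ∈ exclNbr G (epos k) (eneg k), (Y (epos k) - Y m) ^ 2)
            + ∑ m ∈ exclNbr G (eneg k) (epos k), (Y (eneg k) - Y m) ^ 2) := by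
    have e1 : ∑ k, (1 / 2 : ℝ) * cc k * z k * z k
        = ∑ k, (1 / 2 : ℝ) * (((exclNbr G (epos k) (eneg k)).card : ℝ)
            * (Y (epos k) - Y (eneg k)) ^ 2
          + ((exclNbr G (eneg k) (epos k)).card : ℝ)
            * (Y (eneg k) - Y (epos k)) ^ 2) := by
      refine Finset.sum_congr rfl (fun k _ => ?_)
      simp only [hcc, hzdef]
      push_cast
      ring
    rw [e1, ← Finset.mul_sum, ← Finset.mul_sum, hQ]
  rw [hdc]
  -- final termwise estimate
  have hterm : ∀ k : Fin p, (0 : ℝ) ≤ V k * ((∑ m ∈ exclNbr G (epos k) (eneg k),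
        (Y (epos k) - Y m)) - ∑ m ∈ exclNbr G (eneg k) (epos k), (Y (eneg k) - Y m))
      + 1 / 2 * cc k * V k * V k
      + 1 / 2 * ((∑ m ∈ exclNbr G (epos k) (eneg k), (Y (epos k) - Y m) ^ 2)
        + ∑ m ∈ exclNbr G (eneg k) (epos k), (Y (eneg k) - Y m) ^ 2) := by
    intro k
    have t1 : (0 : ℝ) ≤ ∑ m ∈ exclNbr G (epos k) (eneg k),
        (V k * (Y (epos k) - Y m) + 1 / 2 * (V k * V k)
          + 1 / 2 * (Y (epos k) - Y m) ^ 2) :=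
      Finset.sum_nonneg (fun m _ => by nlinarith [sq_nonneg (V k + (Y (epos k) - Y m))])
    have t2 : (0 : ℝ) ≤ ∑ m ∈ exclNbr G (eneg k) (epos k),
        (-(V k * (Y (eneg k) - Y m)) + 1 / 2 * (V k * V k)
          + 1 / 2 * (Y (eneg k) - Y m) ^ 2) :=
      Finset.sum_nonneg (fun m _ => by nlinarith [sq_nonneg (V k - (Y (eneg k) - Y m))])
    have hexp : V k * ((∑ m ∈ exclNbr G (epos k) (eneg k), (Y (epos k) - Y m))
          - ∑ m ∈ exclNbr G (eneg k) (epos k), (Y (eneg k) - Y m))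
        + 1 / 2 * cc k * V k * V k
        + 1 / 2 * ((∑ m ∈ exclNbr G (epos k) (eneg k), (Y (epos k) - Y m) ^ 2)
          + ∑ m ∈ exclNbr G (eneg k) (epos k), (Y (eneg k) - Y m) ^ 2)
        = (∑ m ∈ exclNbr G (epos k) (eneg k),
            (V k * (Y (epos k) - Y m) + 1 / 2 * (V k * V k)
              + 1 / 2 * (Y (epos k) - Y m) ^ 2))
          + ∑ m ∈ exclNbr G (eneg k) (epos k),
            (-(V k * (Y (eneg k) - Y m)) + 1 / 2 * (V k * V k)
              + 1 / 2 * (Y (eneg k) - Y m) ^ 2) := by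
      rw [Finset.sum_add_distrib, Finset.sum_add_distrib,
        Finset.sum_add_distrib, Finset.sum_add_distrib,
        ← Finset.mul_sum, ← Finset.mul_sum, ← Finset.mul_sum, ← Finset.mul_sum,
        Finset.sum_const, Finset.sum_const, nsmul_eq_mul, nsmul_eq_mul,
        Finset.sum_neg_distrib, ← Finset.mul_sum, ← Finset.mul_sum]
      simp only [hcc]
      push_cast
      ring
    rw [hexp]
    linarith [t1, t2]
  have hsum : (0 : ℝ) ≤ ∑ k, (V k * ((∑ m ∈ exclNbr G (epos k) (eneg k),
        (Y (epos k) - Y m)) - ∑ m ∈ exclNbr G (eneg k) (epos k), (Y (eneg k) - Y m))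
      + 1 / 2 * cc k * V k * V k
      + 1 / 2 * ((∑ m ∈ exclNbr G (epos k) (eneg k), (Y (epos k) - Y m) ^ 2)
        + ∑ m ∈ exclNbr G (eneg k) (epos k), (Y (eneg k) - Y m) ^ 2)) :=
    Finset.sum_nonneg (fun k _ => hterm k)
  rw [Finset.sum_add_distrib, Finset.sum_add_distrib] at hsum
  have hsplit : ∑ k, V k * ((1 + rr k) * z k
        + ((∑ m ∈ exclNbr G (epos k) (eneg k), (Y (epos k) - Y m))
          - ∑ m ∈ exclNbr G (eneg k) (epos k), (Y (eneg k) - Y m)))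
      = (∑ k, V k * ((1 + rr k) * z k))
        + ∑ k, V k * ((∑ m ∈ exclNbr G (epos k) (eneg k), (Y (epos k) - Y m))
          - ∑ m ∈ exclNbr G (eneg k) (epos k), (Y (eneg k) - Y m)) := by
    rw [← Finset.sum_add_distrib]
    exact Finset.sum_congr rfl (fun k _ => by ring)
  linarith [hsum, hsplit]

end Key

section Integ

lemma mulInt {f g : ℝ → ℝ} {μ : Measure ℝ} (hf : MemLp f 2 μ) (hg : MemLp g 2 μ) :
    Integrable (fun t => f t * g t) μ := by
  have h : MemLp (f • g) 1 μ := hg.smul hf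
  rw [← memLp_one_iff_integrable]
  exact h

lemma integMat {a b : ℕ} {μ : Measure ℝ} (M : Matrix (Fin a) (Fin b) ℝ)
    (f : Fin a → ℝ → ℝ) (g : Fin b → ℝ → ℝ)
    (hf : ∀ i, MemLp (f i) 2 μ) (hg : ∀ j, MemLp (g j) 2 μ) :
    Integrable (fun t => (fun i => f i t) ⬝ᵥ (M *ᵥ (fun j => g j t))) μ := by
  have h : (fun t => (fun i => f i t) ⬝ᵥ (M *ᵥ (fun j => g j t)))
      = fun t => ∑ i, ∑ j, M i j * (f i t * g j t) := by
    funext t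
    simp only [dotProduct, mulVec]
    refine Finset.sum_congr rfl (fun i _ => ?_)
    rw [Finset.mul_sum]
    exact Finset.sum_congr rfl (fun j _ => by ring)
  rw [h]
  apply MeasureTheory.integrable_finset_sum
  intro i _
  apply MeasureTheory.integrable_finset_sum
  intro j _
  exact (mulInt (hf i) (hg j)).const_mul (M i j)

end Integ

/-- the structural inequality
`⟨V, Dᵀ(DDᵀ − I)Y⟩_T ≥ ⟨V, (I+Φ)DᵀY⟩_T − ⟨V, Φ̄V⟩_T − ⟨DᵀY, Φ̄DᵀY⟩_T`,
where `Φ = diag(r̃_k)` counts common neighbours and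
`Φ̄ = (1/2)diag(r̄_k)` with `r̄_k = |N_i^j| + |N_j^i|` for `e_k = (i,j)`. -/
theorem stmt_6 {n p : ℕ} (G : SimpleGraph (Fin n)) [DecidableRel G.Adj]
    (epos eneg : Fin p → Fin n)
    (hadj : ∀ k, G.Adj (epos k) (eneg k))
    (hinj : Function.Injective (fun k : Fin p => s(epos k, eneg k)))
    (hsurj : ∀ a b : Fin n, G.Adj a b → ∃ k, s(epos k, eneg k) = s(a, b))
    (D : Matrix (Fin n) (Fin p) ℝ)
    (hD : ∀ i k, D i k =
      if i = epos k then 1 else if i = eneg k then -1 else 0)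
    (T : ℝ) (hT : 0 < T)
    (y : Fin n → ℝ → ℝ) (v : Fin p → ℝ → ℝ)
    (hy2 : ∀ i, MemLp (y i) 2 (volume.restrict (Set.Ioc 0 T)))
    (hv2 : ∀ k, MemLp (v k) 2 (volume.restrict (Set.Ioc 0 T))) :
    (∫ t in (0:ℝ)..T,
        (fun k => v k t) ⬝ᵥ ((Dᵀ * (D * Dᵀ - 1)) *ᵥ (fun i => y i t))) ≥
      (∫ t in (0:ℝ)..T,
          (fun k => v k t) ⬝ᵥ
            (((1 : Matrix (Fin p) (Fin p) ℝ)
                + diagonal (fun k =>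
                    ((G.neighborFinset (epos k) ∩ G.neighborFinset (eneg k)).card : ℝ)))
              *ᵥ (Dᵀ *ᵥ (fun i => y i t))))
        - (∫ t in (0:ℝ)..T,
            (fun k => v k t) ⬝ᵥ
              (((1 / 2 : ℝ) • diagonal (fun k =>
                  (((exclNbr G (epos k) (eneg k)).card
                    + (exclNbr G (eneg k) (epos k)).card : ℕ) : ℝ)))
                *ᵥ (fun k => v k t)))
        - (∫ t in (0:ℝ)..T,
            (Dᵀ *ᵥ (fun i => y i t)) ⬝ᵥ
              (((1 / 2 : ℝ) • diagonal (fun k =>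
                  (((exclNbr G (epos k) (eneg k)).card
                    + (exclNbr G (eneg k) (epos k)).card : ℕ) : ℝ)))
                *ᵥ (Dᵀ *ᵥ (fun i => y i t)))) := by
  classical
  have hle := hT.le
  rw [intervalIntegral.integral_of_le hle, intervalIntegral.integral_of_le hle,
    intervalIntegral.integral_of_le hle, intervalIntegral.integral_of_le hle]
  set μ := volume.restrict (Set.Ioc (0:ℝ) T) with hμ
  set A : ℝ → ℝ := fun t =>
    (fun k => v k t) ⬝ᵥ ((Dᵀ * (D * Dᵀ - 1)) *ᵥ (fun i => y i t)) with hA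
  set B : ℝ → ℝ := fun t =>
    (fun k => v k t) ⬝ᵥ
      (((1 : Matrix (Fin p) (Fin p) ℝ)
          + diagonal (fun k =>
              ((G.neighborFinset (epos k) ∩ G.neighborFinset (eneg k)).card : ℝ)))
        *ᵥ (Dᵀ *ᵥ (fun i => y i t))) with hB
  set C : ℝ → ℝ := fun t =>
    (fun k => v k t) ⬝ᵥ
      (((1 / 2 : ℝ) • diagonal (fun k =>
          (((exclNbr G (epos k) (eneg k)).card
            + (exclNbr G (eneg k) (epos k)).card : ℕ) : ℝ)))
        *ᵥ (fun k => v k t)) with hC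
  set E : ℝ → ℝ := fun t =>
    (Dᵀ *ᵥ (fun i => y i t)) ⬝ᵥ
      (((1 / 2 : ℝ) • diagonal (fun k =>
          (((exclNbr G (epos k) (eneg k)).card
            + (exclNbr G (eneg k) (epos k)).card : ℕ) : ℝ)))
        *ᵥ (Dᵀ *ᵥ (fun i => y i t))) with hE
  have hAint : Integrable A μ := by
    rw [hA]; exact integMat _ v y hv2 hy2
  have hBint : Integrable B μ := by
    rw [hB]
    simp only [mulVec_mulVec]
    exact integMat _ v y hv2 hy2
  have hCint : Integrable C μ := by
    rw [hC]; exact integMat _ v v hv2 hv2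
  have hEint : Integrable E μ := by
    rw [hE]
    have he : ∀ (w : Fin n → ℝ) (u : Fin p → ℝ),
        (Dᵀ *ᵥ w) ⬝ᵥ u = w ⬝ᵥ (D *ᵥ u) := by
      intro w u
      rw [mulVec_transpose, ← dotProduct_mulVec]
    simp only [he, mulVec_mulVec]
    exact integMat _ y y hy2 hy2
  have hpt : ∀ t, B t ≤ A t + (C t + E t) := by
    intro t
    have hk := key G epos eneg hadj hinj hsurj D hD (fun k => v k t) (fun i => y i t)
    simp only [hA, hB, hC, hE]
    linarith [hk]
  have hCE : Integrable (fun t => C t + E t) μ := hCint.add hEint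
  have hACE : Integrable (fun t => A t + (C t + E t)) μ := hAint.add hCE
  have hmono : ∫ t, B t ∂μ ≤ ∫ t, (A t + (C t + E t)) ∂μ :=
    integral_mono hBint hACE hpt
  rw [integral_add hAint hCE, integral_add hCint hEint] at hmono
  linarith [hmono]
end

section
/- (Lemma 1) Let G=(N,E) be a finite simple undirected graph with n nodes, p edges, and incidence matrix D∈ℝ^{n×p}. Fix T>0 and let y_1,…,y_n and v_1,…,v_p be square-integrable real functions on [0,T]; set Y=(y_1,…,y_n)ᵀ, V=(v_1,…,v_p)ᵀ, and u_i := −(DV)_i. Suppose that for every edge e_k=(i,j)∈E there exist constants ν_k≤0, γ_k∈ℝ, β_k∈ℝ such that ⟨u_i−u_j, y_i−y_j⟩_T ≥ ν_k(‖u_i‖_T² + ‖u_j‖_T²) + γ_k‖y_i−y_j‖_T² + β_k. Then ⟨−V, (2I+Φ)DᵀY⟩_T ≥ ⟨DᵀY, (Γ−Φ̄)DᵀY⟩_T + ⟨V, (DᵀΞD − Φ̄)V⟩_T + β̄, where β̄ = Σ_{k=1}^p β_k, Γ=diag(γ_1,…,γ_p), Ξ=diag(ν̃_1,…,ν̃_n)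 with ν̃_i=Σ_{e_k∈E_i} ν_k, Φ=diag(r̃_1,…,r̃_p), and Φ̄=(1/2)diag(r̄_1,…,r̄_p). -/
open Matrix Finset MeasureTheory

section aux
variable {n p : ℕ} (G : SimpleGraph (Fin n)) [DecidableRel G.Adj]
  (epos eneg : Fin p → Fin n)
  (hadj : ∀ k, G.Adj (epos k) (eneg k))
  (hinj : Function.Injective (fun k : Fin p => s(epos k, eneg k)))
  (hsurj : ∀ a b : Fin n, G.Adj a b → ∃ k, s(epos k, eneg k) = s(a, b))

include hadj hinj hsurj in

/-- sum over edges incident to `a` of a function of the other endpoint. -/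
lemma incident_sum (a : Fin n) (f : Fin n → ℝ) :
    ∑ k ∈ univ.filter (fun k => epos k = a ∨ eneg k = a),
        f (if epos k = a then eneg k else epos k)
      = ∑ m ∈ G.neighborFinset a, f m := by
  refine Finset.sum_bij (fun k _ => if epos k = a then eneg k else epos k) ?_ ?_ ?_ ?_
  · intro k hk
    simp only [mem_filter, mem_univ, true_and] at hk
    rcases hk with h | h
    · simp only [h, if_pos rfl, SimpleGraph.mem_neighborFinset]
      exact h ▸ hadj k
    · have hne : epos k ≠ a := by
        intro h2; exact (hadj k).ne (h2.trans h.symm)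
      simp only [hne, if_neg hne, SimpleGraph.mem_neighborFinset]
      exact h ▸ (hadj k).symm
  · intro k1 h1 k2 h2 he
    simp only [mem_filter, mem_univ, true_and] at h1 h2
    apply hinj
    have e1 : s(epos k1, eneg k1) = s(a, if epos k1 = a then eneg k1 else epos k1) := by
      rcases h1 with h | h
      · simp [h]
      · have hne : epos k1 ≠ a := fun h2 => (hadj k1).ne (h2.trans h.symm)
        simp [hne, h, Sym2.eq_swap]
    have e2 : s(epos k2, eneg k2) = s(a, if epos k2 = a then eneg k2 else epos k2) := by
      rcases h2 with h | h
      · simp [h]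
      · have hne : epos k2 ≠ a := fun h2 => (hadj k2).ne (h2.trans h.symm)
        simp [hne, h, Sym2.eq_swap]
    simp only [e1, e2, he]
  · intro m hm
    rw [SimpleGraph.mem_neighborFinset] at hm
    obtain ⟨k, hk⟩ := hsurj a m hm
    rw [Sym2.eq_iff] at hk
    rcases hk with ⟨h1, h2⟩ | ⟨h1, h2⟩
    · exact ⟨k, by simp [h1], by simp [h1, h2]⟩
    · refine ⟨k, by simp [h2], ?_⟩
      have hne : epos k ≠ a := fun h => (hadj k).ne (h.trans h2.symm)
      show (if epos k = a then eneg k else epos k) = m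
      rw [if_neg hne, h1]
  · intro k hk; rfl

end aux

section aux2
variable {n p : ℕ} (G : SimpleGraph (Fin n)) [DecidableRel G.Adj]
  (epos eneg : Fin p → Fin n)
  (hadj : ∀ k, G.Adj (epos k) (eneg k))
  (hinj : Function.Injective (fun k : Fin p => s(epos k, eneg k)))
  (hsurj : ∀ a b : Fin n, G.Adj a b → ∃ k, s(epos k, eneg k) = s(a, b))

include hadj in
lemma two_filter (k : Fin p) (g : Fin n → ℝ) :
    ∑ a : Fin n, (if epos k = a ∨ eneg k = a then g a else 0)
      = g (epos k) + g (eneg k) := by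
  have hne := (hadj k).ne
  have key : ∀ a : Fin n, (if epos k = a ∨ eneg k = a then g a else 0)
      = (if a = epos k then g a else 0) + (if a = eneg k then g a else 0) := by
    intro a
    by_cases h1 : a = epos k <;> by_cases h2 : a = eneg k <;>
      simp [h1, h2, eq_comm] at * <;> simp [hne] at *
  rw [Finset.sum_congr rfl fun a _ => key a, Finset.sum_add_distrib,
    Finset.sum_ite_eq' univ (epos k) g, Finset.sum_ite_eq' univ (eneg k) g]
  simp

include hadj in
lemma swap_sum (g : Fin n → Fin p → ℝ) :
    ∑ a : Fin n, ∑ k ∈ univ.filter (fun k => epos k = a ∨ eneg k = a), g a k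
      = ∑ k : Fin p, (g (epos k) k + g (eneg k) k) := by
  simp only [Finset.sum_filter]
  rw [Finset.sum_comm]
  exact Finset.sum_congr rfl fun k _ => two_filter G epos eneg hadj k (fun a => g a k)

include hadj hinj hsurj in
lemma pair_sum (F : Fin n → Fin n → ℝ) :
    ∑ a : Fin n, ∑ m ∈ G.neighborFinset a, F a m
      = ∑ k : Fin p, (F (epos k) (eneg k) + F (eneg k) (epos k)) := by
  rw [Finset.sum_congr rfl fun a _ =>
    (incident_sum G epos eneg hadj hinj hsurj a (F a)).symm]
  rw [swap_sum G epos eneg hadj]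
  refine Finset.sum_congr rfl fun k _ => ?_
  have hne := (hadj k).ne
  rw [if_pos rfl, if_neg hne]

lemma nbr_decomp (a b : Fin n) (hab : G.Adj a b) (f : Fin n → ℝ) :
    ∑ m ∈ G.neighborFinset a, f m
      = f b + (∑ m ∈ G.neighborFinset a ∩ G.neighborFinset b, f m)
        + ∑ m ∈ exclNbr G a b, f m := by
  have hset : G.neighborFinset a
      = insert b ((G.neighborFinset a ∩ G.neighborFinset b) ∪ exclNbr G a b) := by
    ext m
    simp only [mem_insert, mem_union, mem_inter, exclNbr, mem_filter,
      SimpleGraph.mem_neighborFinset]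
    constructor
    · intro h
      by_cases hb : m = b
      · exact Or.inl hb
      · by_cases hc : G.Adj b m
        · exact Or.inr (Or.inl ⟨h, hc⟩)
        · exact Or.inr (Or.inr ⟨h, fun hx => hc hx.2, hb⟩)
    · rintro (rfl | ⟨h, _⟩ | ⟨h, _, _⟩)
      · exact hab
      · exact h
      · exact h
  have hb1 : b ∉ (G.neighborFinset a ∩ G.neighborFinset b) ∪ exclNbr G a b := by
    simp only [mem_union, mem_inter, exclNbr, mem_filter, SimpleGraph.mem_neighborFinset]
    rintro (⟨_, hbb⟩ | ⟨_, _, hbb⟩)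
    · exact G.irrefl hbb
    · exact hbb rfl
  have hdisj : Disjoint (G.neighborFinset a ∩ G.neighborFinset b) (exclNbr G a b) := by
    rw [Finset.disjoint_left]
    intro m hm hm2
    simp only [exclNbr, mem_filter] at hm2
    exact hm2.2.1 hm
  conv_lhs => rw [hset]
  rw [Finset.sum_insert hb1, Finset.sum_union hdisj, add_assoc]

end aux2

section aux3
variable {n p : ℕ} (G : SimpleGraph (Fin n)) [DecidableRel G.Adj]
  (epos eneg : Fin p → Fin n)
  (hadj : ∀ k, G.Adj (epos k) (eneg k))
  (hinj : Function.Injective (fun k : Fin p => s(epos k, eneg k)))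
  (hsurj : ∀ a b : Fin n, G.Adj a b → ∃ k, s(epos k, eneg k) = s(a, b))

include hadj hinj hsurj in
lemma count_ident (g : Fin n → Fin n → ℝ) (hg : ∀ a b, g a b = g b a) :
    ∑ k : Fin p, ((∑ m ∈ exclNbr G (epos k) (eneg k), g (epos k) m)
        + ∑ m ∈ exclNbr G (eneg k) (epos k), g (eneg k) m)
      = ∑ k : Fin p,
          (((exclNbr G (epos k) (eneg k)).card
            + (exclNbr G (eneg k) (epos k)).card : ℝ) * g (epos k) (eneg k)) := by
  rw [← pair_sum G epos eneg hadj hinj hsurj (fun a b => ∑ m ∈ exclNbr G a b, g a m)]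
  have step2 : ∀ k : Fin p,
      (((exclNbr G (epos k) (eneg k)).card + (exclNbr G (eneg k) (epos k)).card : ℝ)
          * g (epos k) (eneg k))
        = ((exclNbr G (epos k) (eneg k)).card : ℝ) * g (epos k) (eneg k)
          + ((exclNbr G (eneg k) (epos k)).card : ℝ) * g (eneg k) (epos k) := by
    intro k; rw [hg (eneg k) (epos k)]; ring
  rw [Finset.sum_congr rfl fun k _ => step2 k,
    ← pair_sum G epos eneg hadj hinj hsurj
      (fun a b => ((exclNbr G a b).card : ℝ) * g a b)]
  refine Finset.sum_congr rfl fun a _ => ?_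
  have hswap : (∑ b ∈ G.neighborFinset a, ∑ m ∈ exclNbr G a b, g a m)
      = ∑ m ∈ G.neighborFinset a, ∑ b ∈ exclNbr G a m, g a m := by
    refine Finset.sum_comm' ?_
    intro b m
    simp only [exclNbr, mem_filter, mem_inter, SimpleGraph.mem_neighborFinset]
    constructor
    · rintro ⟨h1, h2, h3, h4⟩
      exact ⟨⟨h1, fun hx => h3 ⟨h2, hx.2.symm⟩, fun hx => h4 hx.symm⟩, h2⟩
    · rintro ⟨⟨h1, h3, h4⟩, h2⟩
      exact ⟨h1, h2, fun hx => h3 ⟨h1, hx.2.symm⟩, fun hx => h4 hx.symm⟩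
  rw [hswap]
  refine Finset.sum_congr rfl fun m _ => ?_
  rw [Finset.sum_const, nsmul_eq_mul]

end aux3

section aux4
variable {n p : ℕ} (G : SimpleGraph (Fin n)) [DecidableRel G.Adj]
  (epos eneg : Fin p → Fin n)
  (hadj : ∀ k, G.Adj (epos k) (eneg k))
  (hinj : Function.Injective (fun k : Fin p => s(epos k, eneg k)))
  (hsurj : ∀ a b : Fin n, G.Adj a b → ∃ k, s(epos k, eneg k) = s(a, b))
  (D : Matrix (Fin n) (Fin p) ℝ)
  (hD : ∀ i k, D i k = if i = epos k then 1 else if i = eneg k then -1 else 0)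

include hadj hD in
lemma mulVecT (w : Fin n → ℝ) (k : Fin p) :
    (Dᵀ *ᵥ w) k = w (epos k) - w (eneg k) := by
  have hne := (hadj k).ne
  simp only [mulVec, dotProduct, transpose_apply]
  have key : ∀ i, D i k * w i
      = (if i = epos k then w i else 0) - (if i = eneg k then w i else 0) := by
    intro i
    rw [hD]
    by_cases h1 : i = epos k <;> by_cases h2 : i = eneg k
    · exact absurd (h1.symm.trans h2) hne
    · simp [h1, h2, hne]
    · simp [h1, h2, hne, Ne.symm hne]
    · simp [h1, h2]
  rw [Finset.sum_congr rfl fun i _ => key i, Finset.sum_sub_distrib,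
    Finset.sum_ite_eq' univ (epos k) w, Finset.sum_ite_eq' univ (eneg k) w]
  simp

include hadj hinj hsurj hD in
lemma mulVecD_edge (w : Fin n → ℝ) (i : Fin n) :
    (D *ᵥ fun k => w (epos k) - w (eneg k)) i
      = ∑ m ∈ G.neighborFinset i, (w i - w m) := by
  simp only [mulVec, dotProduct]
  have key : ∀ k, D i k * (w (epos k) - w (eneg k))
      = if epos k = i ∨ eneg k = i
          then (w i - w (if epos k = i then eneg k else epos k)) else 0 := by
    intro k
    have hne := (hadj k).ne
    rw [hD]
    by_cases h1 : epos k = i <;> by_cases h2 : eneg k = i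
    · exact absurd (h1.trans h2.symm) hne
    · subst h1
      simp [h2, hne, Ne.symm hne, fun h : epos k = eneg k => hne h]
    · subst h2
      simp [hne, Ne.symm hne]
    · have e1 : ¬ i = epos k := fun h => h1 h.symm
      have e2 : ¬ i = eneg k := fun h => h2 h.symm
      simp [h1, h2, e1, e2]
  rw [Finset.sum_congr rfl fun k _ => key k, ← Finset.sum_filter]
  exact incident_sum G epos eneg hadj hinj hsurj i (fun m => w i - w m)

include hadj hinj hsurj hD in
lemma DtD_ident (w : Fin n → ℝ) (k : Fin p) :
    (Dᵀ *ᵥ (D *ᵥ fun k' => w (epos k') - w (eneg k'))) k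
      = (2 + ((G.neighborFinset (epos k) ∩ G.neighborFinset (eneg k)).card : ℝ))
            * (w (epos k) - w (eneg k))
        + ((∑ m ∈ exclNbr G (epos k) (eneg k), (w (epos k) - w m))
          - ∑ m ∈ exclNbr G (eneg k) (epos k), (w (eneg k) - w m)) := by
  rw [mulVecT G epos eneg hadj D hD, mulVecD_edge G epos eneg hadj hinj hsurj D hD,
    mulVecD_edge G epos eneg hadj hinj hsurj D hD]
  rw [nbr_decomp G (epos k) (eneg k) (hadj k) (fun m => w (epos k) - w m),
    nbr_decomp G (eneg k) (epos k) (hadj k).symm (fun m => w (eneg k) - w m)]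
  rw [Finset.inter_comm (G.neighborFinset (eneg k))]
  have hB : (∑ m ∈ G.neighborFinset (epos k) ∩ G.neighborFinset (eneg k),
        (w (epos k) - w m))
      - (∑ m ∈ G.neighborFinset (epos k) ∩ G.neighborFinset (eneg k),
        (w (eneg k) - w m))
      = ((G.neighborFinset (epos k) ∩ G.neighborFinset (eneg k)).card : ℝ)
          * (w (epos k) - w (eneg k)) := by
    rw [← Finset.sum_sub_distrib]
    rw [Finset.sum_congr rfl (fun m _ => by ring :
      ∀ m ∈ G.neighborFinset (epos k) ∩ G.neighborFinset (eneg k),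
        w (epos k) - w m - (w (eneg k) - w m) = w (epos k) - w (eneg k))]
    rw [Finset.sum_const, nsmul_eq_mul]
  linarith [hB]

end aux4

/-- Lemma 1: under the pairwise edge dissipativity inequalities
with `u = −DV`,
`⟨−V, (2I+Φ)DᵀY⟩_T ≥ ⟨DᵀY, (Γ−Φ̄)DᵀY⟩_T + ⟨V, (DᵀΞD − Φ̄)V⟩_T + β̄`. -/
theorem stmt_7 {n p : ℕ} (G : SimpleGraph (Fin n)) [DecidableRel G.Adj]
    (epos eneg : Fin p → Fin n)
    (hadj : ∀ k, G.Adj (epos k) (eneg k))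
    (hinj : Function.Injective (fun k : Fin p => s(epos k, eneg k)))
    (hsurj : ∀ a b : Fin n, G.Adj a b → ∃ k, s(epos k, eneg k) = s(a, b))
    (D : Matrix (Fin n) (Fin p) ℝ)
    (hD : ∀ i k, D i k =
      if i = epos k then 1 else if i = eneg k then -1 else 0)
    (T : ℝ) (hT : 0 < T)
    (y : Fin n → ℝ → ℝ) (v : Fin p → ℝ → ℝ)
    (hy2 : ∀ i, MemLp (y i) 2 (volume.restrict (Set.Ioc 0 T)))
    (hv2 : ∀ k, MemLp (v k) 2 (volume.restrict (Set.Ioc 0 T)))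
    (u : Fin n → ℝ → ℝ)
    (hu : ∀ i t, u i t = -(D *ᵥ (fun k => v k t)) i)
    (ν γ β : Fin p → ℝ) (hν : ∀ k, ν k ≤ 0)
    (hedge : ∀ k : Fin p,
      (∫ t in (0:ℝ)..T,
          (u (epos k) t - u (eneg k) t) * (y (epos k) t - y (eneg k) t)) ≥
        ν k * ((∫ t in (0:ℝ)..T, (u (epos k) t) ^ 2)
              + ∫ t in (0:ℝ)..T, (u (eneg k) t) ^ 2)
          + γ k * (∫ t in (0:ℝ)..T, (y (epos k) t - y (eneg k) t) ^ 2)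
          + β k) :
    (∫ t in (0:ℝ)..T,
        (fun k => -(v k t)) ⬝ᵥ
          (((2 : ℝ) • (1 : Matrix (Fin p) (Fin p) ℝ)
              + diagonal (fun k =>
                  ((G.neighborFinset (epos k) ∩ G.neighborFinset (eneg k)).card : ℝ)))
            *ᵥ (Dᵀ *ᵥ (fun i => y i t)))) ≥
      (∫ t in (0:ℝ)..T,
          (Dᵀ *ᵥ (fun i => y i t)) ⬝ᵥ
            ((diagonal γ
                - (1 / 2 : ℝ) • diagonal (fun k =>
                    (((exclNbr G (epos k) (eneg k)).card
                      + (exclNbr G (eneg k) (epos k)).card : ℕ) : ℝ)))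
              *ᵥ (Dᵀ *ᵥ (fun i => y i t))))
        + (∫ t in (0:ℝ)..T,
            (fun k => v k t) ⬝ᵥ
              ((Dᵀ * diagonal (fun i =>
                    ∑ k ∈ univ.filter (fun k => epos k = i ∨ eneg k = i), ν k)
                  * D
                - (1 / 2 : ℝ) • diagonal (fun k =>
                    (((exclNbr G (epos k) (eneg k)).card
                      + (exclNbr G (eneg k) (epos k)).card : ℕ) : ℝ)))
                *ᵥ (fun k => v k t)))
        + ∑ k : Fin p, β k := by
  classical
  have hnek : ∀ k, epos k ≠ eneg k := fun k => (hadj k).ne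
  set μ := volume.restrict (Set.Ioc (0:ℝ) T) with hmu
  -- abbreviations
  set Z : Fin p → ℝ → ℝ := fun k t => y (epos k) t - y (eneg k) t with hZdef
  set φ : Fin p → ℝ := fun k =>
    ((G.neighborFinset (epos k) ∩ G.neighborFinset (eneg k)).card : ℝ) with hφdef
  set ρ : Fin p → ℝ := fun k => ((exclNbr G (epos k) (eneg k)).card : ℝ)
    + ((exclNbr G (eneg k) (epos k)).card : ℝ) with hρdef
  set ξ : Fin n → ℝ := fun i =>
    ∑ k ∈ univ.filter (fun k => epos k = i ∨ eneg k = i), ν k with hξdef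
  -- integrability basics
  have Hmul : ∀ {f g : ℝ → ℝ}, MemLp f 2 μ → MemLp g 2 μ →
      Integrable (fun t => f t * g t) μ := by
    intro f g hf hg
    have h1 := (hf.add hg).integrable_sq
    have h2 := hf.integrable_sq
    have h3 := hg.integrable_sq
    have hrw : (fun t => f t * g t)
        = fun t => (((f t + g t) ^ 2 - f t ^ 2) - g t ^ 2) / 2 := by
      funext t; ring
    rw [hrw]
    exact ((h1.sub h2).sub h3).div_const 2
  have HZ : ∀ k, MemLp (Z k) 2 μ := fun k => (hy2 (epos k)).sub (hy2 (eneg k))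
  have HU : ∀ i, MemLp (u i) 2 μ := by
    intro i
    have hrep : u i = fun t => ∑ k : Fin p, -D i k * v k t := by
      funext t
      rw [hu]
      simp [Matrix.mulVec, dotProduct, neg_mul, Finset.sum_neg_distrib]
    rw [hrep]
    exact memLp_finset_sum univ fun k _ => (hv2 k).const_mul (-D i k)
  have Hc : ∀ (c : ℝ) (f g : ℝ → ℝ), MemLp f 2 μ → MemLp g 2 μ →
      ∀ (h : ℝ → ℝ), (∀ t, h t = c * (f t * g t)) → Integrable h μ := by
    intro c f g hf hg h hh
    exact ((Hmul hf hg).const_mul c).congr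
      (Filter.Eventually.of_forall fun t => (hh t).symm)
  -- numbers
  set JU : Fin n → ℝ := fun i => ∫ t, (u i t) ^ 2 ∂μ with hJU
  set JZ : Fin p → ℝ := fun k => ∫ t, (Z k t) ^ 2 ∂μ with hJZ
  set IA : Fin p → ℝ := fun k =>
    ∫ t, (u (epos k) t - u (eneg k) t) * Z k t ∂μ with hIA
  -- step 1 : summed hedge inequality
  have h1 : ∀ k, IA k ≥ ν k * (JU (epos k) + JU (eneg k)) + γ k * JZ k + β k := by
    intro k
    have := hedge k
    rw [intervalIntegral.integral_of_le hT.le, intervalIntegral.integral_of_le hT.le,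
      intervalIntegral.integral_of_le hT.le, intervalIntegral.integral_of_le hT.le] at this
    exact this
  have hsum1 : ∑ k : Fin p, IA k
      ≥ ∑ k : Fin p, (ν k * (JU (epos k) + JU (eneg k)) + γ k * JZ k + β k) :=
    Finset.sum_le_sum fun k _ => h1 k
  -- step 2 : rewrite the ν-sum via vertex sums
  have h2 : ∑ k : Fin p, ν k * (JU (epos k) + JU (eneg k)) = ∑ i : Fin n, ξ i * JU i := by
    have := swap_sum G epos eneg hadj (fun a k => ν k * JU a)
    rw [hξdef]
    simp only [Finset.sum_mul]
    rw [this]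
    exact Finset.sum_congr rfl fun k _ => by ring
  -- step 3 : Σ IA = ∫ Σ A
  have intA : ∀ k : Fin p, Integrable
      (fun t => (u (epos k) t - u (eneg k) t) * Z k t) μ :=
    fun k => Hmul ((HU (epos k)).sub (HU (eneg k))) (HZ k)
  have h3 : ∑ k : Fin p, IA k
      = ∫ t, ∑ k : Fin p, (u (epos k) t - u (eneg k) t) * Z k t ∂μ :=
    (integral_finset_sum univ fun k _ => intA k).symm
  -- step 4 : pointwise identity A = -v ⬝ (DᵀD Z)
  have symmDtD : ∀ (x w : Fin p → ℝ),
      ∑ k : Fin p, (Dᵀ *ᵥ (D *ᵥ x)) k * w k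
        = ∑ k : Fin p, x k * (Dᵀ *ᵥ (D *ᵥ w)) k := by
    intro x w
    have e1 : ∑ k : Fin p, (Dᵀ *ᵥ (D *ᵥ x)) k * w k = (Dᵀ *ᵥ (D *ᵥ x)) ⬝ᵥ w := rfl
    have e2 : ∑ k : Fin p, x k * (Dᵀ *ᵥ (D *ᵥ w)) k = x ⬝ᵥ (Dᵀ *ᵥ (D *ᵥ w)) := rfl
    have hS : (Dᵀ * D)ᵀ = Dᵀ * D := by
      rw [Matrix.transpose_mul, Matrix.transpose_transpose]
    rw [e1, e2, Matrix.mulVec_mulVec, Matrix.mulVec_mulVec,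
      dotProduct_comm ((Dᵀ * D) *ᵥ x) w, Matrix.dotProduct_mulVec,
      dotProduct_comm (w ᵥ* (Dᵀ * D)) x]
    congr 1
    rw [← hS, Matrix.vecMul_transpose, hS]
  have h4 : ∀ t, ∑ k : Fin p, (u (epos k) t - u (eneg k) t) * Z k t
      = ∑ k : Fin p, (-(v k t)) * (Dᵀ *ᵥ (D *ᵥ fun k' => Z k' t)) k := by
    intro t
    have hA : ∀ k, (u (epos k) t - u (eneg k) t)
        = -((Dᵀ *ᵥ (D *ᵥ fun k' => v k' t)) k) := by
      intro k
      rw [hu, hu, mulVecT G epos eneg hadj D hD]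
      ring
    calc ∑ k : Fin p, (u (epos k) t - u (eneg k) t) * Z k t
        = ∑ k : Fin p, -((Dᵀ *ᵥ (D *ᵥ fun k' => v k' t)) k * Z k t) := by
          refine Finset.sum_congr rfl fun k _ => ?_
          rw [hA k]; ring
      _ = -∑ k : Fin p, (Dᵀ *ᵥ (D *ᵥ fun k' => v k' t)) k * Z k t := by
          rw [Finset.sum_neg_distrib]
      _ = -∑ k : Fin p, v k t * (Dᵀ *ᵥ (D *ᵥ fun k' => Z k' t)) k := by
          rw [symmDtD]
      _ = ∑ k : Fin p, (-(v k t)) * (Dᵀ *ᵥ (D *ᵥ fun k' => Z k' t)) k := by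
          rw [← Finset.sum_neg_distrib]
          exact Finset.sum_congr rfl fun k _ => by ring
  -- step 5 : pointwise bound
  have h5 : ∀ t, ∑ k : Fin p, (-(v k t)) * (Dᵀ *ᵥ (D *ᵥ fun k' => Z k' t)) k
      ≤ ∑ k : Fin p, (-(v k t)) * ((2 + φ k) * Z k t)
        + ∑ k : Fin p, (ρ k / 2) * (v k t) ^ 2
        + ∑ k : Fin p, (ρ k / 2) * (Z k t) ^ 2 := by
    intro t
    have hident : ∀ k, (Dᵀ *ᵥ (D *ᵥ fun k' => Z k' t)) k
        = (2 + φ k) * Z k t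
          + ((∑ m ∈ exclNbr G (epos k) (eneg k), (y (epos k) t - y m t))
            - ∑ m ∈ exclNbr G (eneg k) (epos k), (y (eneg k) t - y m t)) :=
      fun k => DtD_ident G epos eneg hadj hinj hsurj D hD (fun i => y i t) k
    have key : ∀ k : Fin p, (-(v k t)) *
          ((∑ m ∈ exclNbr G (epos k) (eneg k), (y (epos k) t - y m t))
            - ∑ m ∈ exclNbr G (eneg k) (epos k), (y (eneg k) t - y m t))
        ≤ (ρ k / 2) * (v k t) ^ 2
          + (1/2) * ((∑ m ∈ exclNbr G (epos k) (eneg k), (y (epos k) t - y m t) ^ 2)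
            + ∑ m ∈ exclNbr G (eneg k) (epos k), (y (eneg k) t - y m t) ^ 2) := by
      intro k
      have hρk : ρ k = ((exclNbr G (epos k) (eneg k)).card : ℝ)
          + ((exclNbr G (eneg k) (epos k)).card : ℝ) := by rw [hρdef]
      have b1 : ∀ m : Fin n, (-(v k t)) * (y (epos k) t - y m t)
          ≤ (v k t) ^ 2 / 2 + (y (epos k) t - y m t) ^ 2 / 2 := fun m => by
        nlinarith [sq_nonneg (v k t + (y (epos k) t - y m t))]
      have b2 : ∀ m : Fin n, (v k t) * (y (eneg k) t - y m t)
          ≤ (v k t) ^ 2 / 2 + (y (eneg k) t - y m t) ^ 2 / 2 := fun m => by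
        nlinarith [sq_nonneg (v k t - (y (eneg k) t - y m t))]
      have s1 : ∑ m ∈ exclNbr G (epos k) (eneg k), (-(v k t)) * (y (epos k) t - y m t)
          ≤ ∑ m ∈ exclNbr G (epos k) (eneg k),
              ((v k t) ^ 2 / 2 + (y (epos k) t - y m t) ^ 2 / 2) :=
        Finset.sum_le_sum fun m _ => b1 m
      have s2 : ∑ m ∈ exclNbr G (eneg k) (epos k), (v k t) * (y (eneg k) t - y m t)
          ≤ ∑ m ∈ exclNbr G (eneg k) (epos k),
              ((v k t) ^ 2 / 2 + (y (eneg k) t - y m t) ^ 2 / 2) :=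
        Finset.sum_le_sum fun m _ => b2 m
      have e0 : (-(v k t)) *
          ((∑ m ∈ exclNbr G (epos k) (eneg k), (y (epos k) t - y m t))
            - ∑ m ∈ exclNbr G (eneg k) (epos k), (y (eneg k) t - y m t))
          = (∑ m ∈ exclNbr G (epos k) (eneg k), (-(v k t)) * (y (epos k) t - y m t))
            + ∑ m ∈ exclNbr G (eneg k) (epos k), (v k t) * (y (eneg k) t - y m t) := by
        rw [← Finset.mul_sum, ← Finset.mul_sum]; ring
      have e1 : ∑ m ∈ exclNbr G (epos k) (eneg k),
            ((v k t) ^ 2 / 2 + (y (epos k) t - y m t) ^ 2 / 2)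
          = ((exclNbr G (epos k) (eneg k)).card : ℝ) * ((v k t) ^ 2 / 2)
            + (1/2) * ∑ m ∈ exclNbr G (epos k) (eneg k), (y (epos k) t - y m t) ^ 2 := by
        rw [Finset.sum_add_distrib, Finset.sum_const, nsmul_eq_mul, Finset.mul_sum]
        congr 1
        exact Finset.sum_congr rfl fun m _ => by ring
      have e2 : ∑ m ∈ exclNbr G (eneg k) (epos k),
            ((v k t) ^ 2 / 2 + (y (eneg k) t - y m t) ^ 2 / 2)
          = ((exclNbr G (eneg k) (epos k)).card : ℝ) * ((v k t) ^ 2 / 2)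
            + (1/2) * ∑ m ∈ exclNbr G (eneg k) (epos k), (y (eneg k) t - y m t) ^ 2 := by
        rw [Finset.sum_add_distrib, Finset.sum_const, nsmul_eq_mul, Finset.mul_sum]
        congr 1
        exact Finset.sum_congr rfl fun m _ => by ring
      rw [e0]
      rw [e1] at s1
      rw [e2] at s2
      rw [hρk]
      linarith [s1, s2]
    have hcount := count_ident G epos eneg hadj hinj hsurj
      (fun a b => (y a t - y b t) ^ 2) (fun a b => by ring)
    calc ∑ k : Fin p, (-(v k t)) * (Dᵀ *ᵥ (D *ᵥ fun k' => Z k' t)) k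
        = ∑ k : Fin p, ((-(v k t)) * ((2 + φ k) * Z k t)
            + (-(v k t)) *
              ((∑ m ∈ exclNbr G (epos k) (eneg k), (y (epos k) t - y m t))
                - ∑ m ∈ exclNbr G (eneg k) (epos k), (y (eneg k) t - y m t))) := by
          refine Finset.sum_congr rfl fun k _ => ?_
          rw [hident k]; ring
      _ ≤ ∑ k : Fin p, ((-(v k t)) * ((2 + φ k) * Z k t)
            + ((ρ k / 2) * (v k t) ^ 2
              + (1/2) * ((∑ m ∈ exclNbr G (epos k) (eneg k), (y (epos k) t - y m t) ^ 2)
                + ∑ m ∈ exclNbr G (eneg k) (epos k), (y (eneg k) t - y m t) ^ 2))) := by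
          exact Finset.sum_le_sum fun k _ => by
            have := key k
            linarith [this]
      _ = ∑ k : Fin p, (-(v k t)) * ((2 + φ k) * Z k t)
          + ∑ k : Fin p, (ρ k / 2) * (v k t) ^ 2
          + (1/2) * ∑ k : Fin p,
              ((∑ m ∈ exclNbr G (epos k) (eneg k), (y (epos k) t - y m t) ^ 2)
                + ∑ m ∈ exclNbr G (eneg k) (epos k), (y (eneg k) t - y m t) ^ 2) := by
          rw [Finset.sum_add_distrib, Finset.sum_add_distrib, Finset.mul_sum, add_assoc]
      _ = ∑ k : Fin p, (-(v k t)) * ((2 + φ k) * Z k t)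
          + ∑ k : Fin p, (ρ k / 2) * (v k t) ^ 2
          + ∑ k : Fin p, (ρ k / 2) * (Z k t) ^ 2 := by
          rw [hcount]
          congr 1
          rw [Finset.mul_sum]
          refine Finset.sum_congr rfl fun k _ => ?_
          rw [hρdef, hZdef]
          ring
  -- integrability of the canonical integrands
  have intLHS : Integrable (fun t => ∑ k : Fin p, (-(v k t)) * ((2 + φ k) * Z k t)) μ :=
    integrable_finset_sum univ fun k _ =>
      Hc (-(2 + φ k)) (v k) (Z k) (hv2 k) (HZ k) _ (fun t => by ring)
  have intρv : Integrable (fun t => ∑ k : Fin p, (ρ k / 2) * (v k t) ^ 2) μ :=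
    integrable_finset_sum univ fun k _ =>
      Hc (ρ k / 2) (v k) (v k) (hv2 k) (hv2 k) _ (fun t => by ring)
  have intρZ : Integrable (fun t => ∑ k : Fin p, (ρ k / 2) * (Z k t) ^ 2) μ :=
    integrable_finset_sum univ fun k _ =>
      Hc (ρ k / 2) (Z k) (Z k) (HZ k) (HZ k) _ (fun t => by ring)
  have intγZ : Integrable (fun t => ∑ k : Fin p, γ k * (Z k t) ^ 2) μ :=
    integrable_finset_sum univ fun k _ =>
      Hc (γ k) (Z k) (Z k) (HZ k) (HZ k) _ (fun t => by ring)
  have intξu : Integrable (fun t => ∑ i : Fin n, ξ i * (u i t) ^ 2) μ :=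
    integrable_finset_sum univ fun i _ =>
      Hc (ξ i) (u i) (u i) (HU i) (HU i) _ (fun t => by ring)
  have intSumA : Integrable
      (fun t => ∑ k : Fin p, (u (epos k) t - u (eneg k) t) * Z k t) μ :=
    integrable_finset_sum univ fun k _ => intA k
  -- step 6 : integrate the pointwise bound
  have h6 : (∫ t, ∑ k : Fin p, (u (epos k) t - u (eneg k) t) * Z k t ∂μ)
      ≤ ∫ t, (∑ k : Fin p, (-(v k t)) * ((2 + φ k) * Z k t)
          + ∑ k : Fin p, (ρ k / 2) * (v k t) ^ 2
          + ∑ k : Fin p, (ρ k / 2) * (Z k t) ^ 2) ∂μ := by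
    refine integral_mono intSumA ((intLHS.add intρv).add intρZ) ?_
    intro t
    have := h5 t
    rw [← h4 t] at this
    exact this
  have h7 : (∫ t, (∑ k : Fin p, (-(v k t)) * ((2 + φ k) * Z k t)
          + ∑ k : Fin p, (ρ k / 2) * (v k t) ^ 2
          + ∑ k : Fin p, (ρ k / 2) * (Z k t) ^ 2) ∂μ)
      = (∫ t, ∑ k : Fin p, (-(v k t)) * ((2 + φ k) * Z k t) ∂μ)
        + (∫ t, ∑ k : Fin p, (ρ k / 2) * (v k t) ^ 2 ∂μ)
        + ∫ t, ∑ k : Fin p, (ρ k / 2) * (Z k t) ^ 2 ∂μ := by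
    have i12 : Integrable (fun t => ∑ k : Fin p, (-(v k t)) * ((2 + φ k) * Z k t)
        + ∑ k : Fin p, (ρ k / 2) * (v k t) ^ 2) μ := intLHS.add intρv
    rw [integral_add i12 intρZ, integral_add intLHS intρv]
  -- step 7 : express the ν/γ sums as integrals
  have h8 : ∑ k : Fin p, γ k * JZ k = ∫ t, ∑ k : Fin p, γ k * (Z k t) ^ 2 ∂μ := by
    rw [integral_finset_sum univ (fun k (_ : k ∈ univ) =>
      Hc (γ k) (Z k) (Z k) (HZ k) (HZ k)
        (fun t => γ k * (Z k t) ^ 2) (fun t => by ring))]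
    exact Finset.sum_congr rfl fun k _ => (integral_const_mul (γ k) _).symm
  have h9 : ∑ i : Fin n, ξ i * JU i = ∫ t, ∑ i : Fin n, ξ i * (u i t) ^ 2 ∂μ := by
    rw [integral_finset_sum univ (fun i (_ : i ∈ univ) =>
      Hc (ξ i) (u i) (u i) (HU i) (HU i)
        (fun t => ξ i * (u i t) ^ 2) (fun t => by ring))]
    exact Finset.sum_congr rfl fun i _ => (integral_const_mul (ξ i) _).symm
  -- step 8 : split the summed hedge RHS
  have h10 : ∑ k : Fin p, (ν k * (JU (epos k) + JU (eneg k)) + γ k * JZ k + β k)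
      = (∑ k : Fin p, ν k * (JU (epos k) + JU (eneg k)))
        + (∑ k : Fin p, γ k * JZ k) + ∑ k : Fin p, β k := by
    rw [Finset.sum_add_distrib, Finset.sum_add_distrib]
  -- step 9 : rewrite the goal integrals
  rw [ge_iff_le]
  have g1 : (∫ t in (0:ℝ)..T,
        (fun k => -(v k t)) ⬝ᵥ
          (((2 : ℝ) • (1 : Matrix (Fin p) (Fin p) ℝ)
              + diagonal (fun k =>
                  ((G.neighborFinset (epos k) ∩ G.neighborFinset (eneg k)).card : ℝ)))
            *ᵥ (Dᵀ *ᵥ (fun i => y i t))))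
      = ∫ t, ∑ k : Fin p, (-(v k t)) * ((2 + φ k) * Z k t) ∂μ := by
    rw [intervalIntegral.integral_of_le hT.le]
    refine integral_congr_ae (Filter.Eventually.of_forall fun t => ?_)
    dsimp only
    have hZt : (Dᵀ *ᵥ fun i => y i t) = fun k => Z k t :=
      funext fun k => mulVecT G epos eneg hadj D hD (fun i => y i t) k
    rw [hZt, Matrix.add_mulVec, Matrix.smul_mulVec, Matrix.one_mulVec]
    simp only [dotProduct, Pi.add_apply, Pi.smul_apply, smul_eq_mul,
      Matrix.mulVec_diagonal]
    exact Finset.sum_congr rfl fun k _ => by rw [hφdef]; ring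
  have g2 : (∫ t in (0:ℝ)..T,
        (Dᵀ *ᵥ (fun i => y i t)) ⬝ᵥ
          ((diagonal γ
              - (1 / 2 : ℝ) • diagonal (fun k =>
                  (((exclNbr G (epos k) (eneg k)).card
                    + (exclNbr G (eneg k) (epos k)).card : ℕ) : ℝ)))
            *ᵥ (Dᵀ *ᵥ (fun i => y i t))))
      = ∫ t, ∑ k : Fin p, (γ k - ρ k / 2) * (Z k t) ^ 2 ∂μ := by
    rw [intervalIntegral.integral_of_le hT.le]
    refine integral_congr_ae (Filter.Eventually.of_forall fun t => ?_)
    dsimp only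
    have hZt : (Dᵀ *ᵥ fun i => y i t) = fun k => Z k t :=
      funext fun k => mulVecT G epos eneg hadj D hD (fun i => y i t) k
    rw [hZt, Matrix.sub_mulVec, Matrix.smul_mulVec]
    simp only [dotProduct, Pi.sub_apply, Pi.smul_apply, smul_eq_mul,
      Matrix.mulVec_diagonal, Nat.cast_add]
    exact Finset.sum_congr rfl fun k _ => by rw [hρdef]; ring
  have g3 : (∫ t in (0:ℝ)..T,
        (fun k => v k t) ⬝ᵥ
          ((Dᵀ * diagonal (fun i =>
                ∑ k ∈ univ.filter (fun k => epos k = i ∨ eneg k = i), ν k)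
              * D
            - (1 / 2 : ℝ) • diagonal (fun k =>
                (((exclNbr G (epos k) (eneg k)).card
                  + (exclNbr G (eneg k) (epos k)).card : ℕ) : ℝ)))
            *ᵥ (fun k => v k t)))
      = ∫ t, (∑ i : Fin n, ξ i * (u i t) ^ 2
          - ∑ k : Fin p, (ρ k / 2) * (v k t) ^ 2) ∂μ := by
    rw [intervalIntegral.integral_of_le hT.le]
    refine integral_congr_ae (Filter.Eventually.of_forall fun t => ?_)
    dsimp only
    rw [Matrix.sub_mulVec, Matrix.smul_mulVec, dotProduct_sub,
      ← Matrix.mulVec_mulVec, ← Matrix.mulVec_mulVec,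
      Matrix.dotProduct_mulVec (fun k => v k t) Dᵀ, Matrix.vecMul_transpose]
    congr 1
    · simp only [dotProduct, Matrix.mulVec_diagonal]
      refine Finset.sum_congr rfl fun i _ => ?_
      have hui : (D *ᵥ fun k => v k t) i = -(u i t) := by rw [hu]; ring
      rw [hui, hξdef]
      ring
    · simp only [dotProduct, Pi.smul_apply, smul_eq_mul, Matrix.mulVec_diagonal,
        Nat.cast_add]
      refine Finset.sum_congr rfl fun k _ => ?_
      rw [hρdef]
      ring
  rw [g1, g2, g3]
  -- step 10 : split the γ−ρ/2 integral
  have g2split : (∫ t, ∑ k : Fin p, (γ k - ρ k / 2) * (Z k t) ^ 2 ∂μ)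
      = (∫ t, ∑ k : Fin p, γ k * (Z k t) ^ 2 ∂μ)
        - ∫ t, ∑ k : Fin p, (ρ k / 2) * (Z k t) ^ 2 ∂μ := by
    rw [← integral_sub intγZ intρZ]
    refine integral_congr_ae (Filter.Eventually.of_forall fun t => ?_)
    dsimp only
    rw [← Finset.sum_sub_distrib]
    exact Finset.sum_congr rfl fun k _ => by ring
  have g3split : (∫ t, (∑ i : Fin n, ξ i * (u i t) ^ 2
        - ∑ k : Fin p, (ρ k / 2) * (v k t) ^ 2) ∂μ)
      = (∫ t, ∑ i : Fin n, ξ i * (u i t) ^ 2 ∂μ)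
        - ∫ t, ∑ k : Fin p, (ρ k / 2) * (v k t) ^ 2 ∂μ :=
    integral_sub intξu intρv
  rw [g2split, g3split]
  -- final combination
  have final := hsum1
  rw [h10, h2, h8, h9, h3] at final
  linarith [final, h6, h7]
end

section
/- Let Ψ∈ℝ^{p×p} be symmetric and let S=diag(s_1,…,s_p) with s_k≤0 for all k. Let Λ̲=diag(α̲_1,…,α̲_p) with α̲_k>0, and suppose Q := Ψ + Λ̲⁻¹ S Λ̲⁻¹ is positive definite. Then for every diagonal matrix H=diag(η_1,…,η_p) with η_k ≥ α̲_k for all k, both HΨH + S and HΨH are positive definite. -/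
/-!
With `H = diag η`, the matrix `HΨH + S` differs from `HQH` by a diagonal term:
`HΨH + S = HQH + diag (s_k (1 - (η_k / α̲_k)²))`. The congruence `HQH` of `Q` by the
invertible `H` is positive definite, and the diagonal correction is positive semidefinite
because `s_k ≤ 0` and `η_k / α̲_k ≥ 1`. Adding the positive semidefinite `-S` then gives
`HΨH ≻ 0`.
-/

open Matrix

namespace Matrix

variable {n K : Type*} [Fintype n] [DecidableEq n]

theorem inv_diagonal_of_ne_zero [Field K] {a : n → K} (ha : ∀ k, a k ≠ 0) :
    (diagonal a)⁻¹ = diagonal a⁻¹ :=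
  inv_eq_left_inv <| by
    rw [diagonal_mul_diagonal, ← diagonal_one]
    exact congrArg diagonal (funext fun k => inv_mul_cancel₀ (ha k))

theorem diagonal_mul_mul_diagonal_add_diagonal [Field K] (Ψ : Matrix n n K) {a : n → K}
    (ha : ∀ k, a k ≠ 0) (s η : n → K) :
    diagonal η * Ψ * diagonal η + diagonal s =
      diagonal η * (Ψ + (diagonal a)⁻¹ * diagonal s * (diagonal a)⁻¹) * diagonal η +
        diagonal fun k => s k * (1 - (η k / a k) ^ 2) := by
  rw [inv_diagonal_of_ne_zero ha, mul_add, add_mul, add_assoc, diagonal_mul_diagonal,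
    diagonal_mul_diagonal, diagonal_mul_diagonal, diagonal_mul_diagonal, diagonal_add]
  congr 2
  ext k
  simp only [Pi.inv_apply]
  ring

theorem PosDef.diagonal_mul_mul_diagonal [Field K] [PartialOrder K] [StarRing K] [TrivialStar K]
    {A : Matrix n n K} (hA : A.PosDef) {d : n → K} (hd : ∀ k, d k ≠ 0) :
    (diagonal d * A * diagonal d).PosDef := by
  have hU : IsUnit (diagonal d) := isUnit_diagonal.mpr (Pi.isUnit_iff.mpr fun k => (hd k).isUnit)
  simpa [star_eq_conjTranspose] using (IsUnit.posDef_star_left_conjugate_iff hU).mpr hA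

end Matrix

theorem stmt_9_general {p : ℕ} (Ψ : Matrix (Fin p) (Fin p) ℝ)
    (s αlo η : Fin p → ℝ)
    (hs : ∀ k, s k ≤ 0) (hαlo : ∀ k, 0 < αlo k) (hη : ∀ k, αlo k ≤ η k)
    (hQ : (Ψ + (diagonal αlo)⁻¹ * diagonal s * (diagonal αlo)⁻¹).PosDef) :
    (diagonal η * Ψ * diagonal η + diagonal s).PosDef ∧
      (diagonal η * Ψ * diagonal η).PosDef := by
  have hratio : ∀ k, 1 ≤ (η k / αlo k) ^ 2 := fun k =>
    one_le_pow₀ ((one_le_div (hαlo k)).mpr (hη k))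
  have hS : (diagonal fun k => s k * (1 - (η k / αlo k) ^ 2)).PosSemidef :=
    PosSemidef.diagonal fun k => mul_nonneg_of_nonpos_of_nonpos (hs k) (sub_nonpos.mpr (hratio k))
  have hfirst : (diagonal η * Ψ * diagonal η + diagonal s).PosDef := by
    rw [diagonal_mul_mul_diagonal_add_diagonal Ψ (fun k => (hαlo k).ne') s η]
    exact (hQ.diagonal_mul_mul_diagonal fun k => ((hαlo k).trans_le (hη k)).ne').add_posSemidef hS
  refine ⟨hfirst, ?_⟩
  have hsum := hfirst.add_posSemidef
    (PosSemidef.diagonal (d := fun k => -s k) fun k => neg_nonneg.mpr (hs k))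
  rwa [← diagonal_neg, add_neg_cancel_right] at hsum

/-- if `Q := Ψ + Λ̲⁻¹ S Λ̲⁻¹ ≻ 0` with `Ψ` symmetric, `S`
diagonal with nonpositive entries and `Λ̲` diagonal with positive entries,
then for every diagonal `H = diag(η)` with `η_k ≥ α̲_k` both `HΨH + S` and
`HΨH` are positive definite. -/
theorem stmt_9 {p : ℕ} (Ψ : Matrix (Fin p) (Fin p) ℝ) (hΨ : Ψ.IsSymm)
    (s αlo η : Fin p → ℝ)
    (hs : ∀ k, s k ≤ 0) (hαlo : ∀ k, 0 < αlo k) (hη : ∀ k, αlo k ≤ η k)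
    (hQ : (Ψ + (diagonal αlo)⁻¹ * diagonal s * (diagonal αlo)⁻¹).PosDef) :
    (diagonal η * Ψ * diagonal η + diagonal s).PosDef ∧
      (diagonal η * Ψ * diagonal η).PosDef :=
  stmt_9_general Ψ s αlo η hs hαlo hη hQ
end

section
/- Let G=(N,E) be a finite simple undirected graph with n nodes, p edges, and incidence matrix D∈ℝ^{n×p}. Fix T>0, let y_1,…,y_n, w_1,…,w_p, v_1,…,v_p be square-integrable real functions on [0,T], set Y=(y_1,…,y_n)ᵀ, W=(w_1,…,w_p)ᵀ, V=(v_1,…,v_p)ᵀ, and X := DᵀY + W. Suppose (i) for each k, v_k(t)=ϑ_k(x_k(t)) pointwise, where each ϑ_k:ℝ→ℝ satisfies ϑ_k(0)=0 and α̲_k ≤ ϑ_k(x)/x ≤ ᾱ_k for all x≠0 with 0<α̲_k≤ᾱ_k<∞; and (ii) the inequality ⟨−V,(2I+Φ)DᵀY⟩_T ≥ ⟨DᵀY,(Γ−Φ̄)DᵀY⟩_T + ⟨V,(DᵀΞD−Φ̄)V⟩_T + β̄ holds, where Γ, Ξ are given diagonal matrices and β̄∈ℝ. Then ⟨V,(2I+Φ)W⟩_T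 ≥ ⟨V, ΨV⟩_T + ⟨DᵀY,(Γ−Φ̄)DᵀY⟩_T + β̄, where Ψ := DᵀΞD − Φ̄ + (2I+Φ)Λ̄⁻¹ and Λ̄=diag(ᾱ_1,…,ᾱ_p). -/
open Matrix Finset MeasureTheory

lemma mul_int1 {μ : Measure ℝ} {f g : ℝ → ℝ} (hf : MemLp f 2 μ) (hg : MemLp g 2 μ) :
    Integrable (fun t => f t * g t) μ := by
  have h : MemLp (f • g) 1 μ := hg.smul hf (hpqr := ⟨by
    simp [ENNReal.inv_two_add_inv_two]⟩)
  rw [← memLp_one_iff_integrable]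
  exact h

lemma quad_int {a b : ℕ} {μ : Measure ℝ} (A : Matrix (Fin a) (Fin b) ℝ)
    (f : Fin a → ℝ → ℝ) (g : Fin b → ℝ → ℝ)
    (hf : ∀ k, MemLp (f k) 2 μ) (hg : ∀ k, MemLp (g k) 2 μ) :
    Integrable (fun t => (fun k => f k t) ⬝ᵥ (A *ᵥ fun j => g j t)) μ := by
  have he : (fun t => (fun k => f k t) ⬝ᵥ (A *ᵥ fun j => g j t))
      = fun t => ∑ k, ∑ j, A k j * (f k t * g j t) := by
    funext t
    simp only [dotProduct, mulVec]
    refine Finset.sum_congr rfl fun k _ => ?_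
    rw [Finset.mul_sum]
    exact Finset.sum_congr rfl fun j _ => by ring
  rw [he]
  refine integrable_finset_sum _ fun k _ => integrable_finset_sum _ fun j _ => ?_
  exact (mul_int1 (hf k) (hg j)).const_mul _

lemma II_of_int {T : ℝ} (hT : 0 ≤ T) {f : ℝ → ℝ}
    (h : Integrable f (volume.restrict (Set.Ioc 0 T))) :
    IntervalIntegrable f volume 0 T := by
  rw [intervalIntegrable_iff, Set.uIoc_of_le hT]; exact h

/-- combining the sector bounds on the couplings with the
Lemma-1-type inequality gives
`⟨V, (2I+Φ)W⟩_T ≥ ⟨V, ΨV⟩_T + ⟨DᵀY, (Γ−Φ̄)DᵀY⟩_T + β̄`, where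
`Ψ := DᵀΞD − Φ̄ + (2I+Φ)Λ̄⁻¹` and `X := DᵀY + W`, `v_k = ϑ_k(x_k)`. -/
theorem stmt_10 {n p : ℕ} (G : SimpleGraph (Fin n)) [DecidableRel G.Adj]
    (epos eneg : Fin p → Fin n)
    (hadj : ∀ k, G.Adj (epos k) (eneg k))
    (hinj : Function.Injective (fun k : Fin p => s(epos k, eneg k)))
    (hsurj : ∀ a b : Fin n, G.Adj a b → ∃ k, s(epos k, eneg k) = s(a, b))
    (D : Matrix (Fin n) (Fin p) ℝ)
    (hD : ∀ i k, D i k =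
      if i = epos k then 1 else if i = eneg k then -1 else 0)
    (T : ℝ) (hT : 0 < T)
    (y : Fin n → ℝ → ℝ) (w : Fin p → ℝ → ℝ) (v : Fin p → ℝ → ℝ)
    (hy2 : ∀ i, MemLp (y i) 2 (volume.restrict (Set.Ioc 0 T)))
    (hw2 : ∀ k, MemLp (w k) 2 (volume.restrict (Set.Ioc 0 T)))
    (hv2 : ∀ k, MemLp (v k) 2 (volume.restrict (Set.Ioc 0 T)))
    (x : Fin p → ℝ → ℝ)
    (hx : ∀ k t, x k t = (Dᵀ *ᵥ (fun i => y i t)) k + w k t)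
    (ϑ : Fin p → ℝ → ℝ) (αlo αhi : Fin p → ℝ)
    (hαlo : ∀ k, 0 < αlo k) (hαle : ∀ k, αlo k ≤ αhi k)
    (hϑ0 : ∀ k, ϑ k 0 = 0)
    (hsec : ∀ k, ∀ z : ℝ, z ≠ 0 → αlo k ≤ ϑ k z / z ∧ ϑ k z / z ≤ αhi k)
    (hv : ∀ k t, v k t = ϑ k (x k t))
    (γvec : Fin p → ℝ) (νvec : Fin n → ℝ) (βbar : ℝ)
    (hlem : (∫ t in (0:ℝ)..T,
        (fun k => -(v k t)) ⬝ᵥ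
          (((2 : ℝ) • (1 : Matrix (Fin p) (Fin p) ℝ)
              + diagonal (fun k =>
                  ((G.neighborFinset (epos k) ∩ G.neighborFinset (eneg k)).card : ℝ)))
            *ᵥ (Dᵀ *ᵥ (fun i => y i t)))) ≥
      (∫ t in (0:ℝ)..T,
          (Dᵀ *ᵥ (fun i => y i t)) ⬝ᵥ
            ((diagonal γvec
                - (1 / 2 : ℝ) • diagonal (fun k =>
                    (((exclNbr G (epos k) (eneg k)).card
                      + (exclNbr G (eneg k) (epos k)).card : ℕ) : ℝ)))
              *ᵥ (Dᵀ *ᵥ (fun i => y i t))))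
        + (∫ t in (0:ℝ)..T,
            (fun k => v k t) ⬝ᵥ
              ((Dᵀ * diagonal νvec * D
                - (1 / 2 : ℝ) • diagonal (fun k =>
                    (((exclNbr G (epos k) (eneg k)).card
                      + (exclNbr G (eneg k) (epos k)).card : ℕ) : ℝ)))
                *ᵥ (fun k => v k t)))
        + βbar) :
    (∫ t in (0:ℝ)..T,
        (fun k => v k t) ⬝ᵥ
          (((2 : ℝ) • (1 : Matrix (Fin p) (Fin p) ℝ)
              + diagonal (fun k =>
                  ((G.neighborFinset (epos k) ∩ G.neighborFinset (eneg k)).card : ℝ)))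
            *ᵥ (fun k => w k t))) ≥
      (∫ t in (0:ℝ)..T,
          (fun k => v k t) ⬝ᵥ
            ((Dᵀ * diagonal νvec * D
                - (1 / 2 : ℝ) • diagonal (fun k =>
                    (((exclNbr G (epos k) (eneg k)).card
                      + (exclNbr G (eneg k) (epos k)).card : ℕ) : ℝ))
                + ((2 : ℝ) • (1 : Matrix (Fin p) (Fin p) ℝ)
                    + diagonal (fun k =>
                        ((G.neighborFinset (epos k) ∩ G.neighborFinset (eneg k)).card : ℝ)))
                  * (diagonal αhi)⁻¹)
              *ᵥ (fun k => v k t)))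
        + (∫ t in (0:ℝ)..T,
            (Dᵀ *ᵥ (fun i => y i t)) ⬝ᵥ
              ((diagonal γvec
                  - (1 / 2 : ℝ) • diagonal (fun k =>
                      (((exclNbr G (epos k) (eneg k)).card
                        + (exclNbr G (eneg k) (epos k)).card : ℕ) : ℝ)))
                *ᵥ (Dᵀ *ᵥ (fun i => y i t))))
        + βbar := by

  set rt : Fin p → ℝ := fun k =>
    ((G.neighborFinset (epos k) ∩ G.neighborFinset (eneg k)).card : ℝ) with hrt
  set rb : Fin p → ℝ := fun k =>
    (((exclNbr G (epos k) (eneg k)).card + (exclNbr G (eneg k) (epos k)).card : ℕ) : ℝ) with hrb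
  set M : Matrix (Fin p) (Fin p) ℝ :=
    (2 : ℝ) • (1 : Matrix (Fin p) (Fin p) ℝ) + diagonal rt with hM
  set Φb : Matrix (Fin p) (Fin p) ℝ := (1 / 2 : ℝ) • diagonal rb with hPb
  set Amat : Matrix (Fin p) (Fin p) ℝ := diagonal γvec - Φb with hA
  set Bmat : Matrix (Fin p) (Fin p) ℝ := Dᵀ * diagonal νvec * D - Φb with hB
  have hα : ∀ k, 0 < αhi k := fun k => (hαlo k).trans_le (hαle k)
  have hMd : M = diagonal (fun k => 2 + rt k) := by
    rw [hM]; ext i j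
    by_cases h : i = j <;> simp [h, Matrix.one_apply, Matrix.diagonal_apply]
  have hinv : (diagonal αhi)⁻¹ = diagonal (fun k => (αhi k)⁻¹) := by
    apply inv_eq_right_inv
    rw [diagonal_mul_diagonal]
    have he : (fun k => αhi k * (αhi k)⁻¹) = fun _ => (1 : ℝ) := by
      funext k; exact mul_inv_cancel₀ (hα k).ne'
    rw [he, diagonal_one]
  set dvec : Fin p → ℝ := fun k => (2 + rt k) * (αhi k)⁻¹ with hd
  have hPsi : Bmat + M * (diagonal αhi)⁻¹ = Bmat + diagonal dvec := by
    rw [hinv, hMd, diagonal_mul_diagonal]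
  rw [hPsi]
  have hYD2 : ∀ k : Fin p,
      MemLp (fun t => (Dᵀ *ᵥ fun i => y i t) k) 2 (volume.restrict (Set.Ioc 0 T)) := by
    intro k
    have he : (fun t => (Dᵀ *ᵥ fun i => y i t) k) = fun t => ∑ i, D i k * y i t := by
      funext t; simp [mulVec, dotProduct, transpose_apply]
    rw [he]
    exact memLp_finset_sum _ fun i _ => (hy2 i).const_mul _
  have hx2 : ∀ k, MemLp (x k) 2 (volume.restrict (Set.Ioc 0 T)) := by
    intro k
    have he : x k = fun t => (Dᵀ *ᵥ fun i => y i t) k + w k t := funext (hx k)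
    rw [he]
    exact (hYD2 k).add (hw2 k)
  have hv2' : ∀ k, MemLp (fun t => -(v k t)) 2 (volume.restrict (Set.Ioc 0 T)) :=
    fun k => (hv2 k).neg
  have iif1 : IntervalIntegrable
      (fun t => (fun k => -(v k t)) ⬝ᵥ (M *ᵥ (Dᵀ *ᵥ fun i => y i t))) volume 0 T :=
    II_of_int hT.le
      (quad_int M (fun k t => -(v k t)) (fun k t => (Dᵀ *ᵥ fun i => y i t) k) hv2' hYD2)
  have iiq : IntervalIntegrable
      (fun t => (fun k => v k t) ⬝ᵥ (M *ᵥ fun k => x k t)) volume 0 T :=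
    II_of_int hT.le (quad_int M v x hv2 hx2)
  have iifB : IntervalIntegrable
      (fun t => (fun k => v k t) ⬝ᵥ (Bmat *ᵥ fun k => v k t)) volume 0 T :=
    II_of_int hT.le (quad_int Bmat v v hv2 hv2)
  have iih : IntervalIntegrable
      (fun t => (fun k => v k t) ⬝ᵥ (diagonal dvec *ᵥ fun k => v k t)) volume 0 T :=
    II_of_int hT.le (quad_int (diagonal dvec) v v hv2 hv2)
  have hsplit1 : (∫ t in (0:ℝ)..T, (fun k => v k t) ⬝ᵥ (M *ᵥ fun k => w k t))
      = (∫ t in (0:ℝ)..T, (fun k => -(v k t)) ⬝ᵥ (M *ᵥ (Dᵀ *ᵥ fun i => y i t)))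
        + ∫ t in (0:ℝ)..T, (fun k => v k t) ⬝ᵥ (M *ᵥ fun k => x k t) := by
    rw [← intervalIntegral.integral_add iif1 iiq]
    apply intervalIntegral.integral_congr
    intro t _
    beta_reduce
    have hw' : (fun k => w k t) = (fun k => x k t) - (Dᵀ *ᵥ fun i => y i t) := by
      funext k; rw [Pi.sub_apply, hx k t]; ring
    rw [hw', mulVec_sub, dotProduct_sub]
    have hnn : (fun k => -(v k t)) = -(fun k => v k t) := rfl
    simp only [hnn, neg_dotProduct]
    ring
  have hsplit2 : (∫ t in (0:ℝ)..T,
        (fun k => v k t) ⬝ᵥ ((Bmat + diagonal dvec) *ᵥ fun k => v k t))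
      = (∫ t in (0:ℝ)..T, (fun k => v k t) ⬝ᵥ (Bmat *ᵥ fun k => v k t))
        + ∫ t in (0:ℝ)..T, (fun k => v k t) ⬝ᵥ (diagonal dvec *ᵥ fun k => v k t) := by
    rw [← intervalIntegral.integral_add iifB iih]
    apply intervalIntegral.integral_congr
    intro t _
    beta_reduce
    rw [add_mulVec, dotProduct_add]
  have hm0 : ∀ k, (0 : ℝ) ≤ 2 + rt k := by
    intro k
    have h0 : (0 : ℝ) ≤ rt k := by simp [hrt]
    linarith
  have key : ∀ k t, v k t * (dvec k * v k t) ≤ v k t * ((2 + rt k) * x k t) := by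
    intro k t
    have hαk := hα k
    have hmk := hm0 k
    rcases eq_or_ne (x k t) 0 with hz | hz
    · rw [hv k t, hz, hϑ0 k]; simp
    · obtain ⟨hc1, hc2⟩ := hsec k (x k t) hz
      set c := ϑ k (x k t) / x k t with hc
      have hvz : v k t = c * x k t := by rw [hv k t, hc]; field_simp
      have hc0 : 0 < c := lt_of_lt_of_le (hαlo k) hc1
      have hdv : dvec k = (2 + rt k) * (αhi k)⁻¹ := by rw [hd]
      rw [hvz, hdv]
      have h1 : c * (αhi k)⁻¹ ≤ 1 := by
        calc c * (αhi k)⁻¹ ≤ αhi k * (αhi k)⁻¹ :=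
              mul_le_mul_of_nonneg_right hc2 (inv_nonneg.2 hαk.le)
          _ = 1 := mul_inv_cancel₀ hαk.ne'
      nlinarith [mul_nonneg (mul_nonneg hmk hc0.le) (sq_nonneg (x k t)), h1,
        sq_nonneg (x k t), hc0.le]
  have hqh : (∫ t in (0:ℝ)..T, (fun k => v k t) ⬝ᵥ (diagonal dvec *ᵥ fun k => v k t))
      ≤ ∫ t in (0:ℝ)..T, (fun k => v k t) ⬝ᵥ (M *ᵥ fun k => x k t) := by
    apply intervalIntegral.integral_mono_on hT.le iih iiq
    intro t _
    rw [hMd]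
    simp only [dotProduct, mulVec_diagonal]
    exact Finset.sum_le_sum fun k _ => key k t
  rw [hsplit1, hsplit2]
  linarith [hlem, hqh]
end

section
/- Let G=(N,E) be a finite simple undirected connected graph with n nodes, p edges, and incidence matrix D∈ℝ^{n×p}. For each edge e_k let 0<α̲_k≤ᾱ_k<∞ and γ_k≤0 be given, and for each node i let ν̃_i≤0 be given. Define Ξ=diag(ν̃_1,…,ν̃_n), Λ̲=diag(α̲_1,…,α̲_p), Λ̄=diag(ᾱ_1,…,ᾱ_p), Γ=diag(γ_1,…,γ_p), Φ=diag(r̃_1,…,r̃_p), Φ̄=(1/2)diag(r̄_1,…,r̄_p), and Q := DᵀΞD − Φ̄ + (2I+Φ)Λ̄⁻¹ + Λ̲⁻¹(Γ−Φ̄)Λ̲⁻¹. If for every edge e_k=(i,j)∈E it holds that (2+r̃_k)/ᾱ_k − (1+α̲_k²)r̄_k/(2α̲_k²) + γ_k/α̲_k² − r_i|ν̃_i| − r_j|ν̃_j| > 0, then Q is positive definite. -/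
open Matrix Finset

lemma key_posdef {n p : ℕ} (D : Matrix (Fin n) (Fin p) ℝ) (νt : Fin n → ℝ) (d : Fin p → ℝ)
    (hνt : ∀ i, νt i ≤ 0)
    (hD01 : ∀ i k, D i k = 1 ∨ D i k = -1 ∨ D i k = 0)
    (hbound : ∀ k, (∑ i, (D i k) ^ 2 * (|νt i| * (∑ j, (D i j) ^ 2))) < d k) :
    (Dᵀ * diagonal νt * D + diagonal d).PosDef := by
  rw [Matrix.posDef_iff_dotProduct_mulVec]
  constructor
  · have h1 : (Dᵀ * diagonal νt * D).IsHermitian := by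
      have := Matrix.isHermitian_conjTranspose_mul_mul D (Matrix.isHermitian_diagonal νt)
      simpa [Matrix.conjTranspose_eq_transpose_of_trivial] using this
    exact h1.add (Matrix.isHermitian_diagonal d)
  · intro x hx
    have hsx : star x = x := by funext i; simp
    rw [hsx]
    set c : Fin p → ℝ := fun k => ∑ i, (D i k) ^ 2 * (|νt i| * (∑ j, (D i j) ^ 2)) with hc
    set y : Fin n → ℝ := D *ᵥ x with hy
    have hquad : x ⬝ᵥ ((Dᵀ * diagonal νt * D + diagonal d) *ᵥ x)
        = (∑ i, νt i * y i ^ 2) + ∑ k, d k * x k ^ 2 := by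
      rw [Matrix.add_mulVec, dotProduct_add]
      congr 1
      · have e1 : (Dᵀ * diagonal νt * D) *ᵥ x = Dᵀ *ᵥ (diagonal νt *ᵥ y) := by
          rw [hy, Matrix.mulVec_mulVec, Matrix.mulVec_mulVec]
        rw [e1, Matrix.dotProduct_mulVec, Matrix.vecMul_transpose, ← hy]
        simp only [dotProduct, Matrix.mulVec_diagonal]
        exact Finset.sum_congr rfl fun i _ => by ring
      · simp only [dotProduct, Matrix.mulVec_diagonal]
        exact Finset.sum_congr rfl fun k _ => by ring
    rw [hquad]
    have hCS : ∀ i, y i ^ 2 ≤ (∑ j, (D i j) ^ 2) * ∑ k, (D i k) ^ 2 * x k ^ 2 := by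
      intro i
      have h0 : y i = ∑ k, |D i k| * (D i k * x k) := by
        rw [hy]
        simp only [Matrix.mulVec, dotProduct]
        refine Finset.sum_congr rfl fun k _ => ?_
        rcases hD01 i k with h | h | h <;> rw [h] <;> norm_num
      have h1 := Finset.sum_mul_sq_le_sq_mul_sq Finset.univ (fun k => |D i k|)
        (fun k => D i k * x k)
      rw [← h0] at h1
      calc y i ^ 2 ≤ (∑ k, |D i k| ^ 2) * ∑ k, (D i k * x k) ^ 2 := h1
        _ = (∑ j, (D i j) ^ 2) * ∑ k, (D i k) ^ 2 * x k ^ 2 := by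
            congr 1
            · exact Finset.sum_congr rfl fun k _ => by rw [sq_abs]
            · exact Finset.sum_congr rfl fun k _ => by ring
    have hswap : ∑ k, c k * x k ^ 2
        = ∑ i, |νt i| * ((∑ j, (D i j) ^ 2) * ∑ k, (D i k) ^ 2 * x k ^ 2) := by
      have e1 : ∑ k, c k * x k ^ 2
          = ∑ i, ∑ k, (D i k) ^ 2 * (|νt i| * (∑ j, (D i j) ^ 2)) * x k ^ 2 := by
        rw [← Finset.sum_comm]
        exact Finset.sum_congr rfl fun k _ => Finset.sum_mul _ _ _
      rw [e1]
      refine Finset.sum_congr rfl fun i _ => ?_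
      conv_rhs => rw [Finset.mul_sum, Finset.mul_sum]
      exact Finset.sum_congr rfl fun k _ => by ring
    have hneg : -(∑ k, c k * x k ^ 2) ≤ ∑ i, νt i * y i ^ 2 := by
      rw [hswap, ← Finset.sum_neg_distrib]
      refine Finset.sum_le_sum fun i _ => ?_
      have habs : νt i * y i ^ 2 = -(|νt i| * y i ^ 2) := by
        rw [abs_of_nonpos (hνt i)]; ring
      rw [habs]
      have := mul_le_mul_of_nonneg_left (hCS i) (abs_nonneg (νt i))
      linarith
    have hfin : 0 < ∑ k, (d k - c k) * x k ^ 2 := by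
      obtain ⟨k₀, hk₀⟩ := Function.ne_iff.mp hx
      refine Finset.sum_pos' (fun k _ => ?_) ⟨k₀, Finset.mem_univ _, ?_⟩
      · exact mul_nonneg (le_of_lt (sub_pos.mpr (hbound k))) (sq_nonneg _)
      · exact mul_pos (sub_pos.mpr (hbound k₀))
          (by simpa [sq_abs] using pow_pos (abs_pos.mpr hk₀) 2)
    have : ∑ k, (d k - c k) * x k ^ 2 = -(∑ k, c k * x k ^ 2) + ∑ k, d k * x k ^ 2 := by
      rw [← Finset.sum_neg_distrib, ← Finset.sum_add_distrib]
      exact Finset.sum_congr rfl fun k _ => by ring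
    rw [this] at hfin
    linarith

/-- the distributed per-edge conditions of Theorem 1 imply that
`Q := DᵀΞD − Φ̄ + (2I+Φ)Λ̄⁻¹ + Λ̲⁻¹(Γ−Φ̄)Λ̲⁻¹` is positive definite. -/
theorem stmt_11 {n p : ℕ} (G : SimpleGraph (Fin n)) [DecidableRel G.Adj]
    (hconn : G.Connected)
    (epos eneg : Fin p → Fin n)
    (hadj : ∀ k, G.Adj (epos k) (eneg k))
    (hinj : Function.Injective (fun k : Fin p => s(epos k, eneg k)))
    (hsurj : ∀ a b : Fin n, G.Adj a b → ∃ k, s(epos k, eneg k) = s(a, b))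
    (D : Matrix (Fin n) (Fin p) ℝ)
    (hD : ∀ i k, D i k =
      if i = epos k then 1 else if i = eneg k then -1 else 0)
    (αlo αhi γ : Fin p → ℝ) (νt : Fin n → ℝ)
    (hαlo : ∀ k, 0 < αlo k) (hαle : ∀ k, αlo k ≤ αhi k)
    (hγ : ∀ k, γ k ≤ 0) (hνt : ∀ i, νt i ≤ 0)
    (hcond : ∀ k : Fin p,
      0 < (2 + ((G.neighborFinset (epos k) ∩ G.neighborFinset (eneg k)).card : ℝ))
            / αhi k
          - (1 + (αlo k) ^ 2)
              * (((exclNbr G (epos k) (eneg k)).card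
                  + (exclNbr G (eneg k) (epos k)).card : ℕ) : ℝ)
              / (2 * (αlo k) ^ 2)
          + γ k / (αlo k) ^ 2
          - (G.degree (epos k) : ℝ) * |νt (epos k)|
          - (G.degree (eneg k) : ℝ) * |νt (eneg k)|) :
    (Dᵀ * diagonal νt * D
        - (1 / 2 : ℝ) • diagonal (fun k =>
            (((exclNbr G (epos k) (eneg k)).card
              + (exclNbr G (eneg k) (epos k)).card : ℕ) : ℝ))
        + ((2 : ℝ) • (1 : Matrix (Fin p) (Fin p) ℝ)
            + diagonal (fun k =>
                ((G.neighborFinset (epos k) ∩ G.neighborFinset (eneg k)).card : ℝ)))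
          * (diagonal αhi)⁻¹
        + (diagonal αlo)⁻¹
          * (diagonal γ
              - (1 / 2 : ℝ) • diagonal (fun k =>
                  (((exclNbr G (epos k) (eneg k)).card
                    + (exclNbr G (eneg k) (epos k)).card : ℕ) : ℝ)))
          * (diagonal αlo)⁻¹).PosDef := by
  set rb : Fin p → ℝ := fun k =>
    (((exclNbr G (epos k) (eneg k)).card + (exclNbr G (eneg k) (epos k)).card : ℕ) : ℝ)
    with hrb
  set rt : Fin p → ℝ := fun k =>
    ((G.neighborFinset (epos k) ∩ G.neighborFinset (eneg k)).card : ℝ) with hrt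
  have hαhi : ∀ k, 0 < αhi k := fun k => lt_of_lt_of_le (hαlo k) (hαle k)
  set d : Fin p → ℝ := fun k =>
    -(1 / 2 * rb k) + (2 + rt k) * (αhi k)⁻¹
      + (αlo k)⁻¹ * (γ k - 1 / 2 * rb k) * (αlo k)⁻¹ with hd
  have hmat : (Dᵀ * diagonal νt * D
        - (1 / 2 : ℝ) • diagonal rb
        + ((2 : ℝ) • (1 : Matrix (Fin p) (Fin p) ℝ) + diagonal rt)
          * (diagonal αhi)⁻¹
        + (diagonal αlo)⁻¹ * (diagonal γ - (1 / 2 : ℝ) • diagonal rb)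
          * (diagonal αlo)⁻¹)
      = Dᵀ * diagonal νt * D + diagonal d := by
    have hinv : ∀ (v : Fin p → ℝ), (∀ k, v k ≠ 0) →
        (diagonal v)⁻¹ = diagonal (fun k => (v k)⁻¹) := by
      intro v hv
      apply Matrix.inv_eq_right_inv
      rw [Matrix.diagonal_mul_diagonal,
        show (fun k => v k * (v k)⁻¹) = fun _ => (1 : ℝ) from
          funext fun k => mul_inv_cancel₀ (hv k), Matrix.diagonal_one]
    rw [hinv αhi (fun k => ne_of_gt (hαhi k)), hinv αlo (fun k => ne_of_gt (hαlo k))]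
    ext i j
    by_cases hij : i = j
    · subst hij
      simp [Matrix.add_mul, Matrix.mul_add, Matrix.sub_mul, Matrix.mul_sub,
        Matrix.diagonal_mul_diagonal, Matrix.smul_mul, Matrix.mul_smul,
        Matrix.sub_apply, Matrix.add_apply, Matrix.smul_apply,
        Matrix.diagonal_apply_eq, hd, smul_eq_mul]
      ring
    · simp [Matrix.add_mul, Matrix.mul_add, Matrix.sub_mul, Matrix.mul_sub,
        Matrix.diagonal_mul_diagonal, Matrix.smul_mul, Matrix.mul_smul,
        Matrix.sub_apply, Matrix.add_apply, Matrix.smul_apply,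
        Matrix.diagonal_apply_ne _ hij, smul_eq_mul]
  rw [hmat]
  have hD01 : ∀ i k, D i k = 1 ∨ D i k = -1 ∨ D i k = 0 := by
    intro i k; rw [hD i k]; split_ifs <;> simp
  -- degree identity
  have hdeg : ∀ i, (∑ j, (D i j) ^ 2) = (G.degree i : ℝ) := by
    intro i
    have hsum : ∑ j, (D i j) ^ 2
        = ((Finset.univ.filter (fun k => i = epos k ∨ i = eneg k)).card : ℝ) := by
      rw [Finset.card_filter]
      push_cast
      refine Finset.sum_congr rfl fun k _ => ?_
      rw [hD i k]
      by_cases h1 : i = epos k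
      · simp [h1]
      · by_cases h2 : i = eneg k <;> simp [h1, h2]
    rw [hsum]
    norm_cast
    rw [SimpleGraph.degree]
    set s := Finset.univ.filter (fun k => i = epos k ∨ i = eneg k) with hs
    have hmem : ∀ k, k ∈ s ↔ (i = epos k ∨ i = eneg k) := by
      intro k; simp [hs]
    set φ : Fin p → Fin n := fun k => if epos k = i then eneg k else epos k with hφ
    have key : ∀ k ∈ s, s(epos k, eneg k) = s(i, φ k) := by
      intro k hk
      rcases (hmem k).mp hk with h | h
      · simp [hφ, ← h]
      · have hne : epos k ≠ i := by
          rw [h]; exact fun he => (G.ne_of_adj (hadj k)) he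
        simp only [hφ, hne, if_false]
        rw [← h, Sym2.eq_swap]
    refine Finset.card_bij (fun k _ => φ k) ?_ ?_ ?_
    · intro k hk
      show φ k ∈ G.neighborFinset i
      rw [SimpleGraph.mem_neighborFinset]
      rcases (hmem k).mp hk with h | h
      · simp only [hφ]
        rw [if_pos h.symm, h]
        exact hadj k
      · have hne : epos k ≠ i := by
          rw [h]; exact fun he => (G.ne_of_adj (hadj k)) he
        simp only [hφ]
        rw [if_neg hne, h]
        exact (hadj k).symm
    · intro a ha b hb hab
      apply hinj
      show s(epos a, eneg a) = s(epos b, eneg b)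
      have hab' : φ a = φ b := hab
      rw [key a ha, key b hb, hab']
    · intro j hj
      have hadj' : G.Adj i j := (SimpleGraph.mem_neighborFinset _ _ _).mp hj
      obtain ⟨k, hk⟩ := hsurj i j hadj'
      rw [Sym2.eq_iff] at hk
      rcases hk with ⟨h1, h2⟩ | ⟨h1, h2⟩
      · refine ⟨k, (hmem k).mpr (Or.inl h1.symm), ?_⟩
        show φ k = j
        simp only [hφ]
        rw [if_pos h1]
        exact h2
      · refine ⟨k, (hmem k).mpr (Or.inr h2.symm), ?_⟩
        have hne : epos k ≠ i := by rw [h1]; exact (G.ne_of_adj hadj').symm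
        show φ k = j
        simp only [hφ]
        rw [if_neg hne]
        exact h1
  -- pair sum identity
  have hpair : ∀ (k : Fin p) (f : Fin n → ℝ),
      ∑ i, (D i k) ^ 2 * f i = f (epos k) + f (eneg k) := by
    intro k f
    have hne : epos k ≠ eneg k := G.ne_of_adj (hadj k)
    have hterm : ∀ i, (D i k) ^ 2 * f i
        = (if i = epos k then f i else 0) + (if i = eneg k then f i else 0) := by
      intro i
      rw [hD i k]
      split_ifs with h1 h2 h3
      · exact absurd (h1.symm.trans h2) hne
      · ring
      · ring
      · ring
    rw [Finset.sum_congr rfl (fun i _ => hterm i), Finset.sum_add_distrib,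
      Finset.sum_ite_eq' Finset.univ (epos k) f,
      Finset.sum_ite_eq' Finset.univ (eneg k) f]
    simp
  refine key_posdef D νt d hνt hD01 ?_
  intro k
  have hsum : ∑ i, (D i k) ^ 2 * (|νt i| * ∑ j, (D i j) ^ 2)
      = |νt (epos k)| * (G.degree (epos k) : ℝ)
        + |νt (eneg k)| * (G.degree (eneg k) : ℝ) := by
    rw [hpair k (fun i => |νt i| * ∑ j, (D i j) ^ 2)]
    rw [hdeg, hdeg]
  rw [hsum]
  have hc := hcond k
  have hlo : αlo k ≠ 0 := ne_of_gt (hαlo k)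
  have hhi : αhi k ≠ 0 := ne_of_gt (hαhi k)
  have heq : d k - ((G.degree (epos k) : ℝ) * |νt (epos k)|
        + (G.degree (eneg k) : ℝ) * |νt (eneg k)|)
      = (2 + rt k) / αhi k - (1 + (αlo k) ^ 2) * rb k / (2 * (αlo k) ^ 2)
        + γ k / (αlo k) ^ 2
        - (G.degree (epos k) : ℝ) * |νt (epos k)|
        - (G.degree (eneg k) : ℝ) * |νt (eneg k)| := by
    rw [hd]
    field_simp
    ring
  simp only [hrb, hrt] at heq
  ring_nf at heq hc ⊢
  linarith [hc, heq]
end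

section
/- Let μ>0, ᾱ>0, φ̄>0, μ̄≥0 and β∈ℝ be constants, and let a, w, v, s be real numbers with a≥0, w≥0, v≥0. Suppose that (i) μa² ≤ s + 2μ̄aw − β, (ii) s ≤ φ̄vw, and (iii) v² ≤ 2ᾱ²(a² + w²). Then a ≤ ρw + ε, where ρ = √(1/2 + (4ᾱ²φ̄² + 8μ̄²)/μ²) and ε = √(2|β|/μ). -/
theorem sqrt_add_le_aux {x y : ℝ} (hx : 0 ≤ x) (hy : 0 ≤ y) :
    Real.sqrt (x + y) ≤ Real.sqrt x + Real.sqrt y := by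
  have h : x + y ≤ (Real.sqrt x + Real.sqrt y) ^ 2 := by
    have hx' := Real.sq_sqrt hx
    have hy' := Real.sq_sqrt hy
    have := Real.sqrt_nonneg x
    have := Real.sqrt_nonneg y
    nlinarith [mul_nonneg (Real.sqrt_nonneg x) (Real.sqrt_nonneg y)]
  calc Real.sqrt (x + y) ≤ Real.sqrt ((Real.sqrt x + Real.sqrt y) ^ 2) :=
        Real.sqrt_le_sqrt h
  _ = Real.sqrt x + Real.sqrt y :=
        Real.sqrt_sq (by positivity)

/-- a purely arithmetic bound used at the end of the proof of
Theorem 1.  All quantities are real numbers; `Real.sqrt` is the nonnegative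
square root. -/
theorem stmt_12 (μ αbar φbar μbar β a w v s : ℝ)
    (hμ : 0 < μ) (hαbar : 0 < αbar) (hφbar : 0 < φbar) (hμbar : 0 ≤ μbar)
    (ha : 0 ≤ a) (hw : 0 ≤ w) (hv : 0 ≤ v)
    (h1 : μ * a ^ 2 ≤ s + 2 * μbar * a * w - β)
    (h2 : s ≤ φbar * v * w)
    (h3 : v ^ 2 ≤ 2 * αbar ^ 2 * (a ^ 2 + w ^ 2)) :
    a ≤ Real.sqrt (1 / 2 + (4 * αbar ^ 2 * φbar ^ 2 + 8 * μbar ^ 2) / μ ^ 2) * w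
      + Real.sqrt (2 * |β| / μ) := by
  set R : ℝ := 1 / 2 + (4 * αbar ^ 2 * φbar ^ 2 + 8 * μbar ^ 2) / μ ^ 2 with hR
  set E : ℝ := 2 * |β| / μ with hE
  have hβ : -β ≤ |β| := neg_le_abs β
  have hμ2 : (0:ℝ) < μ ^ 2 := by positivity
  have h8α : (0:ℝ) < 8 * αbar ^ 2 := by positivity
  have step1 : (μ * (φbar * v * w)) * (8 * αbar ^ 2) ≤
      (μ ^ 2 * (a ^ 2 + w ^ 2) / 4 + 2 * αbar ^ 2 * φbar ^ 2 * w ^ 2) * (8 * αbar ^ 2) := by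
    nlinarith [sq_nonneg (μ * v - 4 * αbar ^ 2 * φbar * w),
      mul_le_mul_of_nonneg_left h3 (le_of_lt hμ2)]
  have step2 : μ * (φbar * v * w) ≤
      μ ^ 2 * (a ^ 2 + w ^ 2) / 4 + 2 * αbar ^ 2 * φbar ^ 2 * w ^ 2 :=
    le_of_mul_le_mul_right step1 h8α
  have key2 : μ ^ 2 * a ^ 2 ≤
      (μ ^ 2 * (1 / 2) + 4 * αbar ^ 2 * φbar ^ 2 + 8 * μbar ^ 2) * w ^ 2
        + 2 * μ * |β| := by
    have hm1 := mul_le_mul_of_nonneg_left h1 (le_of_lt hμ)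
    have hm2 := mul_le_mul_of_nonneg_left h2 (le_of_lt hμ)
    have hm3 := mul_le_mul_of_nonneg_left hβ (le_of_lt hμ)
    nlinarith [sq_nonneg (μ * a - 4 * μbar * w)]
  have hRnn : 0 ≤ R := by positivity
  have hEnn : 0 ≤ E := by positivity
  have key : a ^ 2 ≤ R * w ^ 2 + E := by
    have h5 : a ^ 2 ≤ ((μ ^ 2 * (1 / 2) + 4 * αbar ^ 2 * φbar ^ 2 + 8 * μbar ^ 2) * w ^ 2
        + 2 * μ * |β|) / μ ^ 2 := by
      rw [le_div_iff₀ hμ2]; linarith [key2]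
    calc a ^ 2 ≤ _ := h5
    _ = R * w ^ 2 + E := by rw [hR, hE]; field_simp; ring
  have h4 : a ≤ Real.sqrt (R * w ^ 2 + E) := by
    calc a = Real.sqrt (a ^ 2) := by rw [Real.sqrt_sq ha]
    _ ≤ Real.sqrt (R * w ^ 2 + E) := Real.sqrt_le_sqrt key
  calc a ≤ Real.sqrt (R * w ^ 2 + E) := h4
  _ ≤ Real.sqrt (R * w ^ 2) + Real.sqrt E := sqrt_add_le_aux (by positivity) hEnn
  _ = Real.sqrt R * w + Real.sqrt E := by
      rw [Real.sqrt_mul hRnn, Real.sqrt_sq hw]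
end

section
/- Let a₁, a₂, a₃, b₂, b₃, δ, θ, θ₃ > 0 satisfy 2a₃θ₃ > b₃² and 2a₂ > θ₃, and define θ₁ = δ²θ₃/(2a₃θ₃ − b₃²) and θ₂ = b₂²/(2a₂ − θ₃), both positive. Let b_{i,1}, b_{j,1}∈ℝ and b̃ = max(|b_{i,1}−1|, |b_{j,1}−1|), and let f:ℝ→ℝ be Lipschitz with constant δ. Suppose for l∈{i,j} the functions x_{l,1}, x_{l,2}, x_{l,3}:[0,∞)→ℝ are differentiable and satisfy ẋ_{l,1} = −a₁x_{l,1} − f(x_{l,3}) + b_{l,1}u_l, ẋ_{l,2} = −a₂x_{l,2} + b₂x_{l,1}, ẋ_{l,3} = −a₃x_{l,3} + b₃x_{l,2}. Then for all t≥0, (1/2)·d/dt Σ_{q=1}^{3}(x_{i,q}−x_{j,q})² ≤ (−a₁+θ+θ₁/2+θ₂/2)·(x_{i,1}−x_{j,1})² + (x_{i,1}−x_{j,1})(u_i−u_j) + (b̃²/(2θ))·(u_i²+u_j²). -/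
/-!
Write `e_q = x_{i,q} - x_{j,q}`. Half the derivative of `Σ e_q²` is `Σ e_q ė_q`, and every cross
term in it is split by a weighted Young inequality `xy ≤ (α/2)x² + y²/(2α)`. The weights are chosen
so that the cascade `e₁ → e₂ → e₃ → e₁` closes: the `e₃²` generated by the Lipschitz term
(weight `θ₁`) and by `b₃e₂e₃` (weight `θ₃`) is exactly absorbed by `-a₃e₃²`, and the `e₂²`
generated by `b₃e₂e₃` and `b₂e₁e₂` (weight `θ₂`) exactly by `-a₂e₂²`. Only `e₁²` survives, together
with the input mismatch `(b_{l,1} - 1)u_l`, split with weight `θ`.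
-/

section OrderedField

variable {K : Type*} [Field K] [LinearOrder K] [IsStrictOrderedRing K]

lemma mul_le_young {α : K} (hα : 0 < α) (x y : K) :
    x * y ≤ α / 2 * x ^ 2 + y ^ 2 / (2 * α) := by
  have key : α / 2 * x ^ 2 + y ^ 2 / (2 * α) - x * y = (α * x - y) ^ 2 / (2 * α) := by
    field_simp
    ring
  have : 0 ≤ (α * x - y) ^ 2 / (2 * α) := by positivity
  linarith

lemma mul_le_young_of_abs_le {α y z : K} (hα : 0 < α) (x : K) (hy : |y| ≤ z) :
    x * y ≤ α / 2 * x ^ 2 + z ^ 2 / (2 * α) := by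
  have hyz : |y| ^ 2 ≤ z ^ 2 := pow_le_pow_left₀ (abs_nonneg y) hy 2
  calc x * y ≤ |x| * |y| := by rw [← abs_mul]; exact le_abs_self _
    _ ≤ α / 2 * |x| ^ 2 + |y| ^ 2 / (2 * α) := mul_le_young hα _ _
    _ ≤ α / 2 * x ^ 2 + z ^ 2 / (2 * α) := by rw [sq_abs]; gcongr

lemma mul_input_mismatch_le {θ β bi bj ui uj : K} (hθ : 0 < θ)
    (hi : |bi - 1| ≤ β) (hj : |bj - 1| ≤ β) (e : K) :
    e * (bi * ui - bj * uj) ≤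
      θ * e ^ 2 + e * (ui - uj) + β ^ 2 / (2 * θ) * (ui ^ 2 + uj ^ 2) := by
  have hbound {b u : K} (hb : |b - 1| ≤ β) : |(b - 1) * u| ≤ β * |u| := by
    rw [abs_mul]
    exact mul_le_mul_of_nonneg_right hb (abs_nonneg u)
  have hyi := mul_le_young_of_abs_le hθ e (hbound (u := ui) hi)
  have hyj := mul_le_young_of_abs_le hθ e (abs_neg ((bj - 1) * uj) ▸ hbound (u := uj) hj)
  rw [mul_pow, sq_abs] at hyi hyj
  linear_combination hyi + hyj

lemma goodwin_cascade_le {a2 a3 b2 b3 δ θ3 Δ : K} (hb2 : 0 < b2) (hδ : 0 < δ) (hθ3 : 0 < θ3)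
    (h3 : b3 ^ 2 < 2 * a3 * θ3) (h2 : θ3 < 2 * a2) (e1 e2 e3 : K) (hΔ : |Δ| ≤ δ * |e3|) :
    e1 * -Δ + e2 * (-a2 * e2 + b2 * e1) + e3 * (-a3 * e3 + b3 * e2) ≤
      ((δ ^ 2 * θ3 / (2 * a3 * θ3 - b3 ^ 2)) / 2 + (b2 ^ 2 / (2 * a2 - θ3)) / 2) * e1 ^ 2 := by
  have hc3 : 0 < 2 * a3 * θ3 - b3 ^ 2 := by linarith
  have hc2 : 0 < 2 * a2 - θ3 := by linarith
  have hθ1 : 0 < δ ^ 2 * θ3 / (2 * a3 * θ3 - b3 ^ 2) := by positivity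
  have hθ2 : 0 < b2 ^ 2 / (2 * a2 - θ3) := by positivity
  have hlip := mul_le_young_of_abs_le hθ1 e1 ((abs_neg Δ).trans_le hΔ)
  have h23 := mul_le_young hθ3 e2 (b3 * e3)
  have h12 := mul_le_young hθ2 e1 (b2 * e2)
  have he3 : (δ * |e3|) ^ 2 / (2 * (δ ^ 2 * θ3 / (2 * a3 * θ3 - b3 ^ 2))) =
      (a3 - b3 ^ 2 / (2 * θ3)) * e3 ^ 2 := by
    rw [mul_pow, sq_abs]
    field_simp
  have he2 : (b2 * e2) ^ 2 / (2 * (b2 ^ 2 / (2 * a2 - θ3))) = (a2 - θ3 / 2) * e2 ^ 2 := by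
    field_simp
  rw [he3] at hlip
  rw [he2] at h12
  linear_combination hlip + h23 + h12

end OrderedField

lemma HasDerivAt.sub_sq {𝕜 : Type*} [NontriviallyNormedField 𝕜] {x y : 𝕜 → 𝕜} {x' y' t : 𝕜}
    (hx : HasDerivAt x x' t) (hy : HasDerivAt y y' t) :
    HasDerivAt (fun s => (x s - y s) ^ 2) (2 * (x t - y t) * (x' - y')) t := by
  simpa using (hx.sub hy).fun_pow 2

theorem stmt_18_general (a1 a2 a3 b2 b3 δ θ θ3 : ℝ)
    (hb2 : 0 < b2)
    (hδ : 0 < δ) (hθ : 0 < θ) (hθ3 : 0 < θ3)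
    (h3 : b3 ^ 2 < 2 * a3 * θ3) (h2 : θ3 < 2 * a2)
    (bi1 bj1 : ℝ)
    (f : ℝ → ℝ) (hf : ∀ x y : ℝ, |f x - f y| ≤ δ * |x - y|)
    (xi1 xi2 xi3 xj1 xj2 xj3 ui uj : ℝ → ℝ)
    (hxi1 : ∀ t : ℝ, 0 ≤ t →
      HasDerivAt xi1 (-a1 * xi1 t - f (xi3 t) + bi1 * ui t) t)
    (hxi2 : ∀ t : ℝ, 0 ≤ t → HasDerivAt xi2 (-a2 * xi2 t + b2 * xi1 t) t)
    (hxi3 : ∀ t : ℝ, 0 ≤ t → HasDerivAt xi3 (-a3 * xi3 t + b3 * xi2 t) t)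
    (hxj1 : ∀ t : ℝ, 0 ≤ t →
      HasDerivAt xj1 (-a1 * xj1 t - f (xj3 t) + bj1 * uj t) t)
    (hxj2 : ∀ t : ℝ, 0 ≤ t → HasDerivAt xj2 (-a2 * xj2 t + b2 * xj1 t) t)
    (hxj3 : ∀ t : ℝ, 0 ≤ t → HasDerivAt xj3 (-a3 * xj3 t + b3 * xj2 t) t) :
    ∀ t : ℝ, 0 ≤ t →
      (1 / 2) * deriv (fun s =>
          (xi1 s - xj1 s) ^ 2 + (xi2 s - xj2 s) ^ 2 + (xi3 s - xj3 s) ^ 2) t ≤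
        (-a1 + θ + (δ ^ 2 * θ3 / (2 * a3 * θ3 - b3 ^ 2)) / 2
            + (b2 ^ 2 / (2 * a2 - θ3)) / 2) * (xi1 t - xj1 t) ^ 2
          + (xi1 t - xj1 t) * (ui t - uj t)
          + ((max |bi1 - 1| |bj1 - 1|) ^ 2 / (2 * θ)) * ((ui t) ^ 2 + (uj t) ^ 2) := by
  intro t ht
  have hV := (((hxi1 t ht).sub_sq (hxj1 t ht)).fun_add ((hxi2 t ht).sub_sq (hxj2 t ht))).fun_add
    ((hxi3 t ht).sub_sq (hxj3 t ht))
  rw [hV.deriv]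
  have hcascade := goodwin_cascade_le hb2 hδ hθ3 h3 h2 (xi1 t - xj1 t) (xi2 t - xj2 t)
    (xi3 t - xj3 t) (hf (xi3 t) (xj3 t))
  have hinput := mul_input_mismatch_le (ui := ui t) (uj := uj t) hθ
    (le_max_left |bi1 - 1| |bj1 - 1|) (le_max_right _ _) (xi1 t - xj1 t)
  linear_combination hcascade + hinput

/-- incremental differential inequality for the full three-state
dynamics of two heterogeneous Goodwin oscillators, with the choices
`θ₁ = δ²θ₃/(2a₃θ₃ − b₃²)` and `θ₂ = b₂²/(2a₂ − θ₃)`. -/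
theorem stmt_18 (a1 a2 a3 b2 b3 δ θ θ3 : ℝ)
    (ha1 : 0 < a1) (ha2 : 0 < a2) (ha3 : 0 < a3) (hb2 : 0 < b2) (hb3 : 0 < b3)
    (hδ : 0 < δ) (hθ : 0 < θ) (hθ3 : 0 < θ3)
    (h3 : b3 ^ 2 < 2 * a3 * θ3) (h2 : θ3 < 2 * a2)
    (bi1 bj1 : ℝ)
    (f : ℝ → ℝ) (hf : ∀ x y : ℝ, |f x - f y| ≤ δ * |x - y|)
    (xi1 xi2 xi3 xj1 xj2 xj3 ui uj : ℝ → ℝ)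
    (hxi1 : ∀ t : ℝ, 0 ≤ t →
      HasDerivAt xi1 (-a1 * xi1 t - f (xi3 t) + bi1 * ui t) t)
    (hxi2 : ∀ t : ℝ, 0 ≤ t → HasDerivAt xi2 (-a2 * xi2 t + b2 * xi1 t) t)
    (hxi3 : ∀ t : ℝ, 0 ≤ t → HasDerivAt xi3 (-a3 * xi3 t + b3 * xi2 t) t)
    (hxj1 : ∀ t : ℝ, 0 ≤ t →
      HasDerivAt xj1 (-a1 * xj1 t - f (xj3 t) + bj1 * uj t) t)
    (hxj2 : ∀ t : ℝ, 0 ≤ t → HasDerivAt xj2 (-a2 * xj2 t + b2 * xj1 t) t)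
    (hxj3 : ∀ t : ℝ, 0 ≤ t → HasDerivAt xj3 (-a3 * xj3 t + b3 * xj2 t) t) :
    ∀ t : ℝ, 0 ≤ t →
      (1 / 2) * deriv (fun s =>
          (xi1 s - xj1 s) ^ 2 + (xi2 s - xj2 s) ^ 2 + (xi3 s - xj3 s) ^ 2) t ≤
        (-a1 + θ + (δ ^ 2 * θ3 / (2 * a3 * θ3 - b3 ^ 2)) / 2
            + (b2 ^ 2 / (2 * a2 - θ3)) / 2) * (xi1 t - xj1 t) ^ 2
          + (xi1 t - xj1 t) * (ui t - uj t)
          + ((max |bi1 - 1| |bj1 - 1|) ^ 2 / (2 * θ)) * ((ui t) ^ 2 + (uj t) ^ 2) :=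
  stmt_18_general a1 a2 a3 b2 b3 δ θ θ3 hb2 hδ hθ hθ3 h3 h2 bi1 bj1 f hf xi1 xi2 xi3 xj1 xj2 xj3 ui
    uj hxi1 hxi2 hxi3 hxj1 hxj2 hxj3
end

section
/- (Proposition 2) Let a₁, a₂, a₃, b₂, b₃, δ, θ, θ₃ > 0 satisfy 2a₃θ₃ > b₃² and 2a₂ > θ₃, and define θ₁ = δ²θ₃/(2a₃θ₃ − b₃²) > 0 and θ₂ = b₂²/(2a₂ − θ₃) > 0. Let b_{i,1}, b_{j,1}∈ℝ and b̃ = max(|b_{i,1}−1|, |b_{j,1}−1|), and let f:ℝ→ℝ be Lipschitz with constant δ. Suppose for l∈{i,j} the functions x_{l,1}, x_{l,2}, x_{l,3}:[0,∞)→ℝ are differentiable and, with locally square-integrable inputs u_l, satisfy ẋ_{l,1} = −a₁x_{l,1} − f(x_{l,3}) + b_{l,1}u_l, ẋ_{l,2} = −a₂x_{l,2} + b₂x_{l,1}, ẋ_{l,3} = −a₃x_{l,3} + b₃x_{l,2}. Then for every T≥0, ∫_0^T (u_i−u_j)(x_{i,1}−x_{j,1}) dt ≥ ν·(∫_0^T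 u_i² dt + ∫_0^T u_j² dt) + γ·∫_0^T (x_{i,1}−x_{j,1})² dt + β, where ν = −b̃²/(2θ), γ = a₁ − θ − θ₁/2 − θ₂/2, and β = −(1/2)Σ_{q=1}^{3}(x_{i,q}(0)−x_{j,q}(0))². -/
open MeasureTheory

lemma young_aux (c x y : ℝ) (hc : 0 < c) : x * y ≤ c / 2 * x ^ 2 + y ^ 2 / (2 * c) := by
  rw [← sub_nonneg]
  have h : c / 2 * x ^ 2 + y ^ 2 / (2 * c) - x * y = (c * x - y) ^ 2 / (2 * c) := by
    field_simp; ring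
  rw [h]; positivity
lemma bdd_mul_int {T : ℝ} {φ ψ : ℝ → ℝ} (hφ : ContinuousOn φ (Set.Icc 0 T))
    (hψ : IntegrableOn ψ (Set.Ioc 0 T)) :
    IntegrableOn (fun t => φ t * ψ t) (Set.Ioc 0 T) := by
  obtain ⟨C, hC⟩ := (isCompact_Icc).exists_bound_of_continuousOn hφ
  refine Integrable.mono' (hψ.abs.const_mul C) ?_ ?_
  · exact ((hφ.mono Set.Ioc_subset_Icc_self).aestronglyMeasurable measurableSet_Ioc).mul
      hψ.aestronglyMeasurable
  · filter_upwards [ae_restrict_mem measurableSet_Ioc] with t ht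
    have h := hC t (Set.Ioc_subset_Icc_self ht)
    rw [Real.norm_eq_abs] at h ⊢
    rw [abs_mul]
    exact mul_le_mul_of_nonneg_right h (abs_nonneg _)

lemma sq_int_to_int {T : ℝ} {u : ℝ → ℝ} (hu : Measurable u)
    (h : IntegrableOn (fun t => u t ^ 2) (Set.Ioc 0 T)) :
    IntegrableOn u (Set.Ioc 0 T) := by
  refine Integrable.mono' ((integrableOn_const (C := (1:ℝ)) measure_Ioc_lt_top.ne).add h)
    hu.aestronglyMeasurable.restrict ?_
  filter_upwards with t
  simp only [Real.norm_eq_abs, Pi.add_apply]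
  nlinarith [sq_nonneg (|u t| - 1), sq_abs (u t), abs_nonneg (u t)]
lemma pointwise_ineq (a1 a2 a3 b2 b3 δ θ θ3 bi1 bj1 E1 E2 E3 U W F : ℝ)
    (hb2 : 0 < b2) (hδ : 0 < δ) (hθ : 0 < θ) (hθ3 : 0 < θ3)
    (h3 : b3 ^ 2 < 2 * a3 * θ3) (h2 : θ3 < 2 * a2)
    (hF : |F| ≤ δ * |E3|) :
    E1 * (-a1 * E1 - F + (bi1 * U - bj1 * W)) + E2 * (-a2 * E2 + b2 * E1)
        + E3 * (-a3 * E3 + b3 * E2)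
      ≤ (U - W) * E1
        - (a1 - θ - (δ ^ 2 * θ3 / (2 * a3 * θ3 - b3 ^ 2)) / 2
            - (b2 ^ 2 / (2 * a2 - θ3)) / 2) * E1 ^ 2
        + (max |bi1 - 1| |bj1 - 1|) ^ 2 / (2 * θ) * (U ^ 2 + W ^ 2) := by
  have hc3 : 0 < 2 * a3 * θ3 - b3 ^ 2 := by linarith
  have hc2 : 0 < 2 * a2 - θ3 := by linarith
  obtain ⟨M, hM⟩ : ∃ x, max |bi1 - 1| |bj1 - 1| = x := ⟨_, rfl⟩
  obtain ⟨θ1, hθ1⟩ : ∃ x, δ ^ 2 * θ3 / (2 * a3 * θ3 - b3 ^ 2) = x := ⟨_, rfl⟩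
  obtain ⟨θ2, hθ2⟩ : ∃ x, b2 ^ 2 / (2 * a2 - θ3) = x := ⟨_, rfl⟩
  rw [hM, hθ1, hθ2]
  have hθ1p : 0 < θ1 := hθ1 ▸ by positivity
  have hθ2p : 0 < θ2 := hθ2 ▸ by positivity
  have hMi : |bi1 - 1| ≤ M := hM ▸ le_max_left _ _
  have hMj : |bj1 - 1| ≤ M := hM ▸ le_max_right _ _
  have hMi2 : (bi1 - 1) ^ 2 ≤ M ^ 2 := by
    nlinarith [sq_abs (bi1 - 1), abs_nonneg (bi1 - 1)]
  have hMj2 : (bj1 - 1) ^ 2 ≤ M ^ 2 := by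
    nlinarith [sq_abs (bj1 - 1), abs_nonneg (bj1 - 1)]
  have hY1 : E1 * ((bi1 - 1) * U) ≤ θ / 2 * E1 ^ 2 + M ^ 2 * U ^ 2 / (2 * θ) := by
    refine (young_aux θ E1 ((bi1 - 1) * U) hθ).trans ?_
    have : ((bi1 - 1) * U) ^ 2 ≤ M ^ 2 * U ^ 2 := by
      rw [mul_pow]; exact mul_le_mul_of_nonneg_right hMi2 (sq_nonneg U)
    gcongr
  have hY2 : E1 * (-((bj1 - 1) * W)) ≤ θ / 2 * E1 ^ 2 + M ^ 2 * W ^ 2 / (2 * θ) := by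
    refine (young_aux θ E1 (-((bj1 - 1) * W)) hθ).trans ?_
    have : (-((bj1 - 1) * W)) ^ 2 ≤ M ^ 2 * W ^ 2 := by
      rw [neg_pow, mul_pow]
      simpa using mul_le_mul_of_nonneg_right hMj2 (sq_nonneg W)
    gcongr
  have hY3 : -(E1 * F) ≤ θ1 / 2 * E1 ^ 2 + δ ^ 2 * E3 ^ 2 / (2 * θ1) := by
    calc -(E1 * F) ≤ |E1 * F| := neg_le_abs _
      _ = |E1| * |F| := abs_mul _ _
      _ ≤ |E1| * (δ * |E3|) := mul_le_mul_of_nonneg_left hF (abs_nonneg _)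
      _ ≤ θ1 / 2 * |E1| ^ 2 + (δ * |E3|) ^ 2 / (2 * θ1) := young_aux θ1 _ _ hθ1p
      _ = θ1 / 2 * E1 ^ 2 + δ ^ 2 * E3 ^ 2 / (2 * θ1) := by
          rw [sq_abs, mul_pow, sq_abs]
  have hY4 : E2 * (b3 * E3) ≤ θ3 / 2 * E2 ^ 2 + b3 ^ 2 * E3 ^ 2 / (2 * θ3) := by
    simpa [mul_pow] using young_aux θ3 E2 (b3 * E3) hθ3
  have hY5 : E1 * (b2 * E2) ≤ θ2 / 2 * E1 ^ 2 + b2 ^ 2 * E2 ^ 2 / (2 * θ2) := by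
    simpa [mul_pow] using young_aux θ2 E1 (b2 * E2) hθ2p
  have hE3 : δ ^ 2 * E3 ^ 2 / (2 * θ1) + b3 ^ 2 * E3 ^ 2 / (2 * θ3) = a3 * E3 ^ 2 := by
    rw [← hθ1]; field_simp; ring
  have hE2 : b2 ^ 2 * E2 ^ 2 / (2 * θ2) + θ3 / 2 * E2 ^ 2 = a2 * E2 ^ 2 := by
    rw [← hθ2]; field_simp; ring
  have key : ((U - W) * E1 - (a1 - θ - θ1 / 2 - θ2 / 2) * E1 ^ 2
        + M ^ 2 / (2 * θ) * (U ^ 2 + W ^ 2))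
      - (E1 * (-a1 * E1 - F + (bi1 * U - bj1 * W)) + E2 * (-a2 * E2 + b2 * E1)
        + E3 * (-a3 * E3 + b3 * E2))
    = (θ / 2 * E1 ^ 2 + M ^ 2 * U ^ 2 / (2 * θ) - E1 * ((bi1 - 1) * U))
      + (θ / 2 * E1 ^ 2 + M ^ 2 * W ^ 2 / (2 * θ) - E1 * (-((bj1 - 1) * W)))
      + (θ1 / 2 * E1 ^ 2 + δ ^ 2 * E3 ^ 2 / (2 * θ1) - (-(E1 * F)))
      + (θ3 / 2 * E2 ^ 2 + b3 ^ 2 * E3 ^ 2 / (2 * θ3) - E2 * (b3 * E3))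
      + (θ2 / 2 * E1 ^ 2 + b2 ^ 2 * E2 ^ 2 / (2 * θ2) - E1 * (b2 * E2))
      + (a3 * E3 ^ 2 - (δ ^ 2 * E3 ^ 2 / (2 * θ1) + b3 ^ 2 * E3 ^ 2 / (2 * θ3)))
      + (a2 * E2 ^ 2 - (b2 ^ 2 * E2 ^ 2 / (2 * θ2) + θ3 / 2 * E2 ^ 2)) := by ring
  linarith [hY1, hY2, hY3, hY4, hY5, hE3, hE2, key]

/-- Proposition 2: two heterogeneous Goodwin oscillators are
generalised mutually incrementally output-feedback passive with parameters
`ν = −b̃²/(2θ)`, `γ = a₁ − θ − θ₁/2 − θ₂/2`,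
`β = −(1/2)Σ_q (x_{i,q}(0) − x_{j,q}(0))²`. -/
theorem stmt_19 (a1 a2 a3 b2 b3 δ θ θ3 : ℝ)
    (ha1 : 0 < a1) (ha2 : 0 < a2) (ha3 : 0 < a3) (hb2 : 0 < b2) (hb3 : 0 < b3)
    (hδ : 0 < δ) (hθ : 0 < θ) (hθ3 : 0 < θ3)
    (h3 : b3 ^ 2 < 2 * a3 * θ3) (h2 : θ3 < 2 * a2)
    (bi1 bj1 : ℝ)
    (f : ℝ → ℝ) (hf : ∀ x y : ℝ, |f x - f y| ≤ δ * |x - y|)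
    (xi1 xi2 xi3 xj1 xj2 xj3 ui uj : ℝ → ℝ)
    (hui : Measurable ui) (huj : Measurable uj)
    (huiL2 : ∀ T : ℝ, IntegrableOn (fun t => (ui t) ^ 2) (Set.Ioc 0 T))
    (hujL2 : ∀ T : ℝ, IntegrableOn (fun t => (uj t) ^ 2) (Set.Ioc 0 T))
    (hxi1 : ∀ t : ℝ, 0 ≤ t →
      HasDerivAt xi1 (-a1 * xi1 t - f (xi3 t) + bi1 * ui t) t)
    (hxi2 : ∀ t : ℝ, 0 ≤ t → HasDerivAt xi2 (-a2 * xi2 t + b2 * xi1 t) t)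
    (hxi3 : ∀ t : ℝ, 0 ≤ t → HasDerivAt xi3 (-a3 * xi3 t + b3 * xi2 t) t)
    (hxj1 : ∀ t : ℝ, 0 ≤ t →
      HasDerivAt xj1 (-a1 * xj1 t - f (xj3 t) + bj1 * uj t) t)
    (hxj2 : ∀ t : ℝ, 0 ≤ t → HasDerivAt xj2 (-a2 * xj2 t + b2 * xj1 t) t)
    (hxj3 : ∀ t : ℝ, 0 ≤ t → HasDerivAt xj3 (-a3 * xj3 t + b3 * xj2 t) t) :
    ∀ T : ℝ, 0 ≤ T →
      (∫ t in (0:ℝ)..T, (ui t - uj t) * (xi1 t - xj1 t)) ≥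
        (-(max |bi1 - 1| |bj1 - 1|) ^ 2 / (2 * θ)) *
            ((∫ t in (0:ℝ)..T, (ui t) ^ 2) + ∫ t in (0:ℝ)..T, (uj t) ^ 2)
          + (a1 - θ - (δ ^ 2 * θ3 / (2 * a3 * θ3 - b3 ^ 2)) / 2
              - (b2 ^ 2 / (2 * a2 - θ3)) / 2) *
            (∫ t in (0:ℝ)..T, (xi1 t - xj1 t) ^ 2)
          - (1 / 2) * ((xi1 0 - xj1 0) ^ 2 + (xi2 0 - xj2 0) ^ 2
              + (xi3 0 - xj3 0) ^ 2) := by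
  intro T hT
  -- names
  set M : ℝ := max |bi1 - 1| |bj1 - 1| with hM
  set γ : ℝ := a1 - θ - (δ ^ 2 * θ3 / (2 * a3 * θ3 - b3 ^ 2)) / 2
      - (b2 ^ 2 / (2 * a2 - θ3)) / 2 with hγ
  -- continuity of the states on [0, T]
  have hfc : Continuous f := by
    have : LipschitzWith ⟨δ, hδ.le⟩ f := by
      refine LipschitzWith.of_dist_le_mul fun x y => ?_
      rw [Real.dist_eq, Real.dist_eq]; exact hf x y
    exact this.continuous
  have hcxi1 : ContinuousOn xi1 (Set.Icc 0 T) := fun t ht =>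
    ((hxi1 t ht.1).continuousAt).continuousWithinAt
  have hcxi2 : ContinuousOn xi2 (Set.Icc 0 T) := fun t ht =>
    ((hxi2 t ht.1).continuousAt).continuousWithinAt
  have hcxi3 : ContinuousOn xi3 (Set.Icc 0 T) := fun t ht =>
    ((hxi3 t ht.1).continuousAt).continuousWithinAt
  have hcxj1 : ContinuousOn xj1 (Set.Icc 0 T) := fun t ht =>
    ((hxj1 t ht.1).continuousAt).continuousWithinAt
  have hcxj2 : ContinuousOn xj2 (Set.Icc 0 T) := fun t ht =>
    ((hxj2 t ht.1).continuousAt).continuousWithinAt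
  have hcxj3 : ContinuousOn xj3 (Set.Icc 0 T) := fun t ht =>
    ((hxj3 t ht.1).continuousAt).continuousWithinAt
  have hce1 : ContinuousOn (fun t => xi1 t - xj1 t) (Set.Icc 0 T) := hcxi1.sub hcxj1
  -- the storage function and its derivative
  set V : ℝ → ℝ := fun t => ((xi1 t - xj1 t) ^ 2 + (xi2 t - xj2 t) ^ 2
      + (xi3 t - xj3 t) ^ 2) / 2 with hV
  set D : ℝ → ℝ := fun t =>
    (xi1 t - xj1 t) * ((-a1 * xi1 t - f (xi3 t) + bi1 * ui t)
        - (-a1 * xj1 t - f (xj3 t) + bj1 * uj t))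
      + (xi2 t - xj2 t) * ((-a2 * xi2 t + b2 * xi1 t) - (-a2 * xj2 t + b2 * xj1 t))
      + (xi3 t - xj3 t) * ((-a3 * xi3 t + b3 * xi2 t) - (-a3 * xj3 t + b3 * xj2 t))
    with hD
  have hVderiv : ∀ t : ℝ, 0 ≤ t → HasDerivAt V (D t) t := by
    intro t ht
    have h1 := ((hxi1 t ht).sub (hxj1 t ht)).pow 2
    have h2' := ((hxi2 t ht).sub (hxj2 t ht)).pow 2
    have h3' := ((hxi3 t ht).sub (hxj3 t ht)).pow 2
    have := ((h1.add h2').add h3').div_const 2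
    convert this using 1
    · rfl
    · rfl
    · rfl
    simp [hD]
    ring
  -- integrability of u_i, u_j and of D
  have hIui : IntegrableOn ui (Set.Ioc 0 T) := sq_int_to_int hui (huiL2 T)
  have hIuj : IntegrableOn uj (Set.Ioc 0 T) := sq_int_to_int huj (hujL2 T)
  have hIS : IntegrableOn (fun t => bi1 * ui t - bj1 * uj t) (Set.Ioc 0 T) :=
    (hIui.const_mul bi1).sub (hIuj.const_mul bj1)
  have hK : ContinuousOn (fun t =>
      (xi1 t - xj1 t) * ((-a1 * xi1 t - f (xi3 t)) - (-a1 * xj1 t - f (xj3 t)))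
      + (xi2 t - xj2 t) * ((-a2 * xi2 t + b2 * xi1 t) - (-a2 * xj2 t + b2 * xj1 t))
      + (xi3 t - xj3 t) * ((-a3 * xi3 t + b3 * xi2 t) - (-a3 * xj3 t + b3 * xj2 t)))
      (Set.Icc 0 T) := by
    refine ContinuousOn.add (ContinuousOn.add ?_ ?_) ?_
    · exact hce1.mul (((continuousOn_const.mul hcxi1).sub
        (hfc.comp_continuousOn hcxi3)).sub
        ((continuousOn_const.mul hcxj1).sub (hfc.comp_continuousOn hcxj3)))
    · exact (hcxi2.sub hcxj2).mul
        (((continuousOn_const.mul hcxi2).add (continuousOn_const.mul hcxi1)).sub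
          ((continuousOn_const.mul hcxj2).add (continuousOn_const.mul hcxj1)))
    · exact (hcxi3.sub hcxj3).mul
        (((continuousOn_const.mul hcxi3).add (continuousOn_const.mul hcxi2)).sub
          ((continuousOn_const.mul hcxj3).add (continuousOn_const.mul hcxj2)))
  have hID : IntegrableOn D (Set.Ioc 0 T) := by
    have h1 : IntegrableOn (fun t =>
        ((xi1 t - xj1 t) * ((-a1 * xi1 t - f (xi3 t)) - (-a1 * xj1 t - f (xj3 t)))
        + (xi2 t - xj2 t) * ((-a2 * xi2 t + b2 * xi1 t) - (-a2 * xj2 t + b2 * xj1 t))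
        + (xi3 t - xj3 t) * ((-a3 * xi3 t + b3 * xi2 t) - (-a3 * xj3 t + b3 * xj2 t)))
        + (xi1 t - xj1 t) * (bi1 * ui t - bj1 * uj t)) (Set.Ioc 0 T) :=
      (hK.integrableOn_Icc.mono_set Set.Ioc_subset_Icc_self).add (bdd_mul_int hce1 hIS)
    refine h1.congr_fun (fun t _ => ?_) measurableSet_Ioc
    simp only [hD]; ring
  -- FTC
  have hIntD : IntervalIntegrable D volume 0 T := by
    rw [intervalIntegrable_iff, Set.uIoc_of_le hT]; exact hID
  have hFTC : (∫ t in (0:ℝ)..T, D t) = V T - V 0 := by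
    apply intervalIntegral.integral_eq_sub_of_hasDerivAt
    · intro t ht
      rw [Set.uIcc_of_le hT] at ht
      exact hVderiv t ht.1
    · exact hIntD
  -- the pointwise bound D ≤ g
  set g : ℝ → ℝ := fun t => (ui t - uj t) * (xi1 t - xj1 t) - γ * (xi1 t - xj1 t) ^ 2
      + M ^ 2 / (2 * θ) * ((ui t) ^ 2 + (uj t) ^ 2) with hg
  have hpt : ∀ t : ℝ, D t ≤ g t := by
    intro t
    have h := pointwise_ineq a1 a2 a3 b2 b3 δ θ θ3 bi1 bj1
      (xi1 t - xj1 t) (xi2 t - xj2 t) (xi3 t - xj3 t) (ui t) (uj t)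
      (f (xi3 t) - f (xj3 t)) hb2 hδ hθ hθ3 h3 h2 (hf _ _)
    calc D t = (xi1 t - xj1 t) * (-a1 * (xi1 t - xj1 t) - (f (xi3 t) - f (xj3 t))
            + (bi1 * ui t - bj1 * uj t))
          + (xi2 t - xj2 t) * (-a2 * (xi2 t - xj2 t) + b2 * (xi1 t - xj1 t))
          + (xi3 t - xj3 t) * (-a3 * (xi3 t - xj3 t) + b3 * (xi2 t - xj2 t)) := by
            simp only [hD]; ring
      _ ≤ _ := h
      _ = g t := by simp only [hg, hγ, hM]
  -- integrability of the pieces of g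
  have hIue : IntegrableOn (fun t => (ui t - uj t) * (xi1 t - xj1 t)) (Set.Ioc 0 T) := by
    have := bdd_mul_int hce1 (hIui.sub hIuj)
    refine this.congr_fun (fun t _ => ?_) measurableSet_Ioc
    simp only [Pi.sub_apply]; ring
  have hIe2 : IntegrableOn (fun t => (xi1 t - xj1 t) ^ 2) (Set.Ioc 0 T) :=
    ((hce1.mul hce1).integrableOn_Icc.mono_set Set.Ioc_subset_Icc_self).congr_fun
      (fun t _ => (sq (xi1 t - xj1 t)).symm ▸ by simp only [Pi.mul_apply]) measurableSet_Ioc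
  have hiue : IntervalIntegrable (fun t => (ui t - uj t) * (xi1 t - xj1 t)) volume 0 T := by
    rw [intervalIntegrable_iff, Set.uIoc_of_le hT]; exact hIue
  have hie2 : IntervalIntegrable (fun t => (xi1 t - xj1 t) ^ 2) volume 0 T := by
    rw [intervalIntegrable_iff, Set.uIoc_of_le hT]; exact hIe2
  have hiu2 : IntervalIntegrable (fun t => (ui t) ^ 2) volume 0 T := by
    rw [intervalIntegrable_iff, Set.uIoc_of_le hT]; exact huiL2 T
  have hju2 : IntervalIntegrable (fun t => (uj t) ^ 2) volume 0 T := by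
    rw [intervalIntegrable_iff, Set.uIoc_of_le hT]; exact hujL2 T
  have hig : IntervalIntegrable g volume 0 T := by
    have : IntervalIntegrable (fun t => (ui t) ^ 2 + (uj t) ^ 2) volume 0 T := hiu2.add hju2
    exact (hiue.sub (hie2.const_mul γ)).add (this.const_mul (M ^ 2 / (2 * θ)))
  -- compare integrals
  have hmono : (∫ t in (0:ℝ)..T, D t) ≤ ∫ t in (0:ℝ)..T, g t :=
    intervalIntegral.integral_mono_on hT hIntD hig (fun t _ => hpt t)
  have hsplit : (∫ t in (0:ℝ)..T, g t)
      = (∫ t in (0:ℝ)..T, (ui t - uj t) * (xi1 t - xj1 t))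
        - γ * (∫ t in (0:ℝ)..T, (xi1 t - xj1 t) ^ 2)
        + M ^ 2 / (2 * θ) * ((∫ t in (0:ℝ)..T, (ui t) ^ 2)
            + ∫ t in (0:ℝ)..T, (uj t) ^ 2) := by
    rw [hg]
    rw [intervalIntegral.integral_add (hiue.sub (hie2.const_mul γ))
      ((hiu2.add hju2).const_mul (M ^ 2 / (2 * θ)))]
    rw [intervalIntegral.integral_sub hiue (hie2.const_mul γ)]
    rw [intervalIntegral.integral_const_mul, intervalIntegral.integral_const_mul]
    rw [intervalIntegral.integral_add hiu2 hju2]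
  have hVT : 0 ≤ V T := by simp only [hV]; positivity
  have hV0 : V 0 = ((xi1 0 - xj1 0) ^ 2 + (xi2 0 - xj2 0) ^ 2 + (xi3 0 - xj3 0) ^ 2) / 2 :=
    rfl
  rw [ge_iff_le]
  clear_value M γ V D g
  have hd : -M ^ 2 / (2 * θ) * ((∫ t in (0:ℝ)..T, (ui t) ^ 2) + ∫ t in (0:ℝ)..T, (uj t) ^ 2)
      = -(M ^ 2 / (2 * θ) * ((∫ t in (0:ℝ)..T, (ui t) ^ 2) + ∫ t in (0:ℝ)..T, (uj t) ^ 2)) := by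
    ring
  rw [hd]
  linarith [hmono, hFTC, hsplit, hVT, hV0]
end
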